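/- arXiv:2109.02968 — 8 statements merged into one kernel-verified Lean document; each statement's English description precedes it below -/
import Mathlib

section
/- Fix integers 1 ≤ d < n, a field k and m ∈ I_{d,n}. Let J ⊆ k[x_u : u ∈ I_{d,n} ∖ {m}] be the ideal generated by the dehomogenized m-primary Plücker relations F̄_{m,u}, u ∈ I^m_{d,n}. Then the composite k-algebra homomorphism from the polynomial ring on the basic variables to k[x_u : u ∈ I_{d,n} ∖ {m}]/J, given by including the basic variables and passing to the quotient, is an isomorphism of k-algebras; in particular k[x_u : u ∈ I_{d,n} ∖ {m}]/J is a polynomial ring in d(n−d) variables over k. -/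
namespace GrassmannianResolution

/-- `I_{d,n}`: the set of `d`-element subsets of `{1,…,n}` (as subsets of `Fin n`). -/
abbrev Idn (d n : ℕ) : Type := {s : Finset (Fin n) // s.card = d}

/-- The Plücker coordinate `p_{s₁ ⋯ s_{d-1} a}` of the list consisting of the elements of `s`
in increasing order followed by `a`, with the standard sign/zero conventions:
it is `0` if the entries are not pairwise distinct (or do not form a valid index),
and otherwise the sign of the sorting permutation times the corresponding variable. -/
noncomputable def pxa (d n : ℕ) (K : Type*) [CommRing K] (s : Finset (Fin n)) (a : Fin n) :
    MvPolynomial (Idn d n) K :=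
  if h : a ∉ s ∧ (insert a s).card = d then
    ((-1 : ℤ) ^ (s.filter fun x => a < x).card) • MvPolynomial.X ⟨insert a s, h.2⟩
  else 0

/-- The Plücker coordinate `p_{a s₁ ⋯ s_{d-1}}` (`a` prepended to the sorted list of `s`). -/
noncomputable def pax (d n : ℕ) (K : Type*) [CommRing K] (a : Fin n) (s : Finset (Fin n)) :
    MvPolynomial (Idn d n) K :=
  if h : a ∉ s ∧ (insert a s).card = d then
    ((-1 : ℤ) ^ (s.filter fun x => x < a).card) • MvPolynomial.X ⟨insert a s, h.2⟩
  else 0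

/-- `p_s` for an index set `s` (listed in increasing order). -/
noncomputable def pvar (d n : ℕ) (K : Type*) [CommRing K] (s : Finset (Fin n)) :
    MvPolynomial (Idn d n) K :=
  if h : s.card = d then MvPolynomial.X ⟨s, h⟩ else 0

/-- The Plücker relation `F_{h,K} = Σ_{λ} (−1)^{λ−1} p_{h K_λ} p_{K ∖ K_λ}`. -/
noncomputable def pluckerRel (d n : ℕ) (K : Type*) [CommRing K] (hh Kk : Finset (Fin n)) :
    MvPolynomial (Idn d n) K :=
  ∑ c ∈ Kk, ((-1 : ℤ) ^ ((Kk.filter fun x => x ≤ c).card + 1)) •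
    (pxa d n K hh c * pvar d n K (Kk.erase c))

/-- The `m`-primary Plücker relation
`F_{m,u} = p_m p_{u^r u₀} + Σ_{i=1}^d (−1)^i p_{u^r m_i} p_{u₀ (m ∖ m_i)}`,
where `u₀ = min (u ∖ m)` and `u^r = u ∖ {u₀}`. -/
noncomputable def primaryRel (d n : ℕ) (K : Type*) [CommRing K] (m u : Idn d n) :
    MvPolynomial (Idn d n) K :=
  if h : (u.1 \ m.1).Nonempty then
    MvPolynomial.X m * pxa d n K (u.1.erase ((u.1 \ m.1).min' h)) ((u.1 \ m.1).min' h)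
      + ∑ c ∈ m.1, ((-1 : ℤ) ^ (m.1.filter fun x => x ≤ c).card) •
          (pxa d n K (u.1.erase ((u.1 \ m.1).min' h)) c *
            pax d n K ((u.1 \ m.1).min' h) (m.1.erase c))
  else 0

/-- Dehomogenization at the chart `p_m = 1`: the `K`-algebra map sending `p_m ↦ 1` and
`p_u ↦ x_u` for `u ≠ m`. -/
noncomputable def dehom (d n : ℕ) (K : Type*) [CommRing K] (m : Idn d n) :
    MvPolynomial (Idn d n) K →ₐ[K] MvPolynomial {w : Idn d n // w ≠ m} K :=
  MvPolynomial.aeval fun w => if h : w = m then 1 else MvPolynomial.X ⟨w, h⟩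

section Aux
variable {d n : ℕ} {m : Idn d n}

lemma diff_nonempty {u : Idn d n} (hu : u ≠ m) : (u.1 \ m.1).Nonempty := by
  rw [Finset.sdiff_nonempty]
  intro hsub
  exact hu (Subtype.ext (Finset.eq_of_subset_of_card_le hsub (by rw [u.2, m.2])))

lemma ne_of_diff_nonempty {u : Idn d n} (h : (u.1 \ m.1).Nonempty) : u ≠ m := by
  intro e; subst e; simp at h

lemma two_le_card {u : Idn d n} (hu : u ≠ m) (h1 : ¬ (u.1 \ m.1).card = 1) :
    2 ≤ (u.1 \ m.1).card := by
  have := Finset.card_pos.mpr (diff_nonempty hu)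
  omega

-- v = insert c ur where ur = u.erase u0, c ∈ m
lemma v_sdiff {u : Idn d n} (h : (u.1 \ m.1).Nonempty) {c : Fin n} (hc : c ∈ m.1) :
    insert c (u.1.erase ((u.1 \ m.1).min' h)) \ m.1 = (u.1 \ m.1).erase ((u.1 \ m.1).min' h) := by
  rw [Finset.insert_sdiff_of_mem _ hc, Finset.erase_sdiff_comm]

lemma v_card_lt {u : Idn d n} (h : (u.1 \ m.1).Nonempty) {c : Fin n} (hc : c ∈ m.1) :
    (insert c (u.1.erase ((u.1 \ m.1).min' h)) \ m.1).card = (u.1 \ m.1).card - 1 := by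
  rw [v_sdiff h hc, Finset.card_erase_of_mem (Finset.min'_mem _ _)]

lemma v_ne {u : Idn d n} (hu : u ≠ m) (h1 : ¬ (u.1 \ m.1).card = 1) {c : Fin n}
    (hcd : (insert c (u.1.erase ((u.1 \ m.1).min' (diff_nonempty hu))) ).card = d) :
    (⟨_, hcd⟩ : Idn d n) ≠ m := by
  apply ne_of_diff_nonempty
  have h2 := two_le_card hu h1
  have hsub : (u.1 \ m.1).erase ((u.1 \ m.1).min' (diff_nonempty hu)) ⊆
      insert c (u.1.erase ((u.1 \ m.1).min' (diff_nonempty hu))) \ m.1 := by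
    intro x hx
    rw [Finset.mem_erase] at hx
    rw [Finset.mem_sdiff] at *
    exact ⟨Finset.mem_insert_of_mem (Finset.mem_erase.mpr ⟨hx.1, hx.2.1⟩), hx.2.2⟩
  obtain ⟨y, hy⟩ : ((u.1 \ m.1).erase ((u.1 \ m.1).min' (diff_nonempty hu))).Nonempty := by
    rw [← Finset.card_pos, Finset.card_erase_of_mem (Finset.min'_mem _ _)]
    omega
  exact ⟨y, hsub hy⟩

lemma u0_notMem_m {u : Idn d n} (h : (u.1 \ m.1).Nonempty) : (u.1 \ m.1).min' h ∉ m.1 :=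
  (Finset.mem_sdiff.mp (Finset.min'_mem _ h)).2

lemma u0_mem_u {u : Idn d n} (h : (u.1 \ m.1).Nonempty) : (u.1 \ m.1).min' h ∈ u.1 :=
  (Finset.mem_sdiff.mp (Finset.min'_mem _ h)).1

-- b = insert u0 (m.erase c)
lemma b_sdiff {u : Idn d n} (h : (u.1 \ m.1).Nonempty) (c : Fin n) :
    insert ((u.1 \ m.1).min' h) (m.1.erase c) \ m.1 = {(u.1 \ m.1).min' h} := by
  rw [Finset.insert_sdiff_of_notMem _ (u0_notMem_m h),
    Finset.sdiff_eq_empty_iff_subset.mpr (Finset.erase_subset _ _)]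
  rfl

lemma b_card_one {u : Idn d n} (h : (u.1 \ m.1).Nonempty) (c : Fin n) :
    (insert ((u.1 \ m.1).min' h) (m.1.erase c) \ m.1).card = 1 := by
  rw [b_sdiff h c]; rfl

lemma b_ne {u : Idn d n} (h : (u.1 \ m.1).Nonempty) {c : Fin n}
    (hcd : (insert ((u.1 \ m.1).min' h) (m.1.erase c)).card = d) :
    (⟨_, hcd⟩ : Idn d n) ≠ m := by
  apply ne_of_diff_nonempty
  rw [← Finset.card_pos, b_card_one h c]
  omega

end Aux

/-- Inverse substitution: expresses every variable in terms of the basic ones. -/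
noncomputable def P {d n : ℕ} (m : Idn d n) (K : Type*) [CommRing K]
    (w : {w : Idn d n // w ≠ m}) :
    MvPolynomial {w : Idn d n // w ≠ m ∧ (w.1 \ m.1).card = 1} K :=
  if h1 : (w.1.1 \ m.1).card = 1 then MvPolynomial.X ⟨w.1, w.2, h1⟩
  else
    -(((-1 : ℤ) ^ (((w.1.1.erase ((w.1.1 \ m.1).min' (diff_nonempty w.2))).filter
          fun x => (w.1.1 \ m.1).min' (diff_nonempty w.2) < x).card)) •
      ∑ c ∈ m.1, ((-1 : ℤ) ^ (m.1.filter fun x => x ≤ c).card) •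
        ((if h : c ∈ m.1 ∧ c ∉ w.1.1.erase ((w.1.1 \ m.1).min' (diff_nonempty w.2)) ∧
              (insert c (w.1.1.erase ((w.1.1 \ m.1).min' (diff_nonempty w.2)))).card = d then
            ((-1 : ℤ) ^ (((w.1.1.erase ((w.1.1 \ m.1).min' (diff_nonempty w.2))).filter
                fun x => c < x).card)) • P m K ⟨⟨_, h.2.2⟩, v_ne w.2 h1 h.2.2⟩
          else 0) *
         (if h' : (w.1.1 \ m.1).min' (diff_nonempty w.2) ∉ m.1.erase c ∧
              (insert ((w.1.1 \ m.1).min' (diff_nonempty w.2)) (m.1.erase c)).card = d then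
            ((-1 : ℤ) ^ (((m.1.erase c).filter
                fun x => x < (w.1.1 \ m.1).min' (diff_nonempty w.2)).card)) •
              P m K ⟨⟨_, h'.2⟩, b_ne (diff_nonempty w.2) h'.2⟩
          else 0)))
  termination_by (w.1.1 \ m.1).card
  decreasing_by
  · rw [v_card_lt (diff_nonempty w.2) h.1]
    have := two_le_card w.2 h1
    omega
  · rw [b_card_one (diff_nonempty w.2)]
    have := two_le_card w.2 h1
    omega


section Main
open MvPolynomial
variable {d n : ℕ} {K : Type*} [CommRing K] {m : Idn d n}
variable {A : Type*} [CommRing A] [Algebra K A]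

lemma aeval_pxa (R : Idn d n → A) (s : Finset (Fin n)) (a : Fin n) :
    MvPolynomial.aeval R (pxa d n K s a) =
      if h : a ∉ s ∧ (insert a s).card = d then
        ((-1 : ℤ) ^ (s.filter fun x => a < x).card) • R ⟨insert a s, h.2⟩
      else 0 := by
  unfold pxa
  split
  · rw [map_zsmul, aeval_X]
  · rw [map_zero]

lemma aeval_pax (R : Idn d n → A) (a : Fin n) (s : Finset (Fin n)) :
    MvPolynomial.aeval R (pax d n K a s) =
      if h : a ∉ s ∧ (insert a s).card = d then
        ((-1 : ℤ) ^ (s.filter fun x => x < a).card) • R ⟨insert a s, h.2⟩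
      else 0 := by
  unfold pax
  split
  · rw [map_zsmul, aeval_X]
  · rw [map_zero]

lemma aeval_primaryRel (R : Idn d n → A) (u : Idn d n) (h : (u.1 \ m.1).Nonempty) :
    MvPolynomial.aeval R (primaryRel d n K m u) =
      R m * (((-1 : ℤ) ^ (((u.1.erase ((u.1 \ m.1).min' h)).filter
            fun x => (u.1 \ m.1).min' h < x).card)) • R u)
      + ∑ c ∈ m.1, ((-1 : ℤ) ^ (m.1.filter fun x => x ≤ c).card) •
          ((if hc : c ∉ u.1.erase ((u.1 \ m.1).min' h) ∧
                (insert c (u.1.erase ((u.1 \ m.1).min' h))).card = d then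
              ((-1 : ℤ) ^ (((u.1.erase ((u.1 \ m.1).min' h)).filter fun x => c < x).card)) •
                R ⟨insert c (u.1.erase ((u.1 \ m.1).min' h)), hc.2⟩
            else 0) *
           (if hb : (u.1 \ m.1).min' h ∉ m.1.erase c ∧
                (insert ((u.1 \ m.1).min' h) (m.1.erase c)).card = d then
              ((-1 : ℤ) ^ (((m.1.erase c).filter fun x => x < (u.1 \ m.1).min' h).card)) •
                R ⟨insert ((u.1 \ m.1).min' h) (m.1.erase c), hb.2⟩
            else 0)) := by
  unfold primaryRel
  rw [dif_pos h, map_add, map_mul, aeval_X, map_sum]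
  congr 1
  · congr 1
    rw [aeval_pxa]
    have hmem := u0_mem_u h
    have hcond : (u.1 \ m.1).min' h ∉ u.1.erase ((u.1 \ m.1).min' h) ∧
        (insert ((u.1 \ m.1).min' h) (u.1.erase ((u.1 \ m.1).min' h))).card = d := by
      refine ⟨Finset.notMem_erase _ _, ?_⟩
      rw [Finset.insert_erase hmem]; exact u.2
    rw [dif_pos hcond]
    have he : (⟨_, hcond.2⟩ : Idn d n) = u := Subtype.ext (Finset.insert_erase hmem)
    rw [he]
  · refine Finset.sum_congr rfl fun c hc => ?_
    rw [map_zsmul, map_mul, aeval_pxa, aeval_pax]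

end Main


section Main2
open MvPolynomial
variable {d n : ℕ} {K : Type*} [CommRing K] {m : Idn d n}

/-- The substitution defining `dehom`. -/
noncomputable def Qm (m : Idn d n) (K : Type*) [CommRing K] :
    Idn d n → MvPolynomial {w : Idn d n // w ≠ m} K :=
  fun w => if h : w = m then 1 else MvPolynomial.X ⟨w, h⟩

lemma dehom_eq_aeval : dehom d n K m = MvPolynomial.aeval (Qm m K) := rfl

@[simp] lemma Qm_self : Qm m K m = 1 := dif_pos rfl

lemma Qm_ne {w : Idn d n} (h : w ≠ m) : Qm m K w = MvPolynomial.X ⟨w, h⟩ := dif_neg h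

lemma P_basic (w : {w : Idn d n // w ≠ m}) (h1 : (w.1.1 \ m.1).card = 1) :
    P m K w = MvPolynomial.X ⟨w.1, w.2, h1⟩ := by
  rw [P, dif_pos h1]

lemma P_eq_of_ne (w : {w : Idn d n // w ≠ m}) (h1 : ¬ (w.1.1 \ m.1).card = 1) :
    P m K w =
    -(((-1 : ℤ) ^ (((w.1.1.erase ((w.1.1 \ m.1).min' (diff_nonempty w.2))).filter
          fun x => (w.1.1 \ m.1).min' (diff_nonempty w.2) < x).card)) •
      ∑ c ∈ m.1, ((-1 : ℤ) ^ (m.1.filter fun x => x ≤ c).card) •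
        ((if h : c ∈ m.1 ∧ c ∉ w.1.1.erase ((w.1.1 \ m.1).min' (diff_nonempty w.2)) ∧
              (insert c (w.1.1.erase ((w.1.1 \ m.1).min' (diff_nonempty w.2)))).card = d then
            ((-1 : ℤ) ^ (((w.1.1.erase ((w.1.1 \ m.1).min' (diff_nonempty w.2))).filter
                fun x => c < x).card)) • P m K ⟨⟨_, h.2.2⟩, v_ne w.2 h1 h.2.2⟩
          else 0) *
         (if h' : (w.1.1 \ m.1).min' (diff_nonempty w.2) ∉ m.1.erase c ∧
              (insert ((w.1.1 \ m.1).min' (diff_nonempty w.2)) (m.1.erase c)).card = d then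
            ((-1 : ℤ) ^ (((m.1.erase c).filter
                fun x => x < (w.1.1 \ m.1).min' (diff_nonempty w.2)).card)) •
              P m K ⟨⟨_, h'.2⟩, b_ne (diff_nonempty w.2) h'.2⟩
          else 0))) := by
  rw [P, dif_neg h1]

lemma Phi_primaryRel_eq_zero (u : Idn d n) (hu2 : 2 ≤ (u.1 \ m.1).card) :
    MvPolynomial.aeval (fun w : Idn d n =>
        if h : w = m then (1 : MvPolynomial {w : Idn d n // w ≠ m ∧ (w.1 \ m.1).card = 1} K)
        else P m K ⟨w, h⟩)
      (primaryRel d n K m u) = 0 := by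
  have hne : u ≠ m := by
    intro e
    rw [e] at hu2
    simp at hu2
  have h : (u.1 \ m.1).Nonempty := diff_nonempty hne
  have h1 : ¬ (u.1 \ m.1).card = 1 := by omega
  rw [aeval_primaryRel _ u h, dif_pos rfl, one_mul, dif_neg hne]
  rw [P_eq_of_ne ⟨u, hne⟩ h1]
  rw [smul_neg, smul_smul, ← pow_add, Even.neg_one_pow ⟨_, rfl⟩, one_smul, neg_add_eq_zero]
  refine Finset.sum_congr rfl fun c hc => ?_
  congr 1
  congr 1
  · by_cases hcc : c ∉ u.1.erase ((u.1 \ m.1).min' h) ∧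
        (insert c (u.1.erase ((u.1 \ m.1).min' h))).card = d
    · rw [dif_pos ⟨hc, hcc⟩, dif_pos hcc]
      show _ = (-1 : ℤ) ^ _ • (if hv : (⟨_, hcc.2⟩ : Idn d n) = m then _ else P m K ⟨_, hv⟩)
      rw [dif_neg (v_ne hne h1 hcc.2)]
    · rw [dif_neg (fun hh => hcc hh.2), dif_neg hcc]
  · by_cases hbb : (u.1 \ m.1).min' h ∉ m.1.erase c ∧
        (insert ((u.1 \ m.1).min' h) (m.1.erase c)).card = d
    · rw [dif_pos hbb, dif_pos hbb]
      show _ = (-1 : ℤ) ^ _ • (if hv : (⟨_, hbb.2⟩ : Idn d n) = m then _ else P m K ⟨_, hv⟩)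
      rw [dif_neg (b_ne h hbb.2)]
    · rw [dif_neg hbb, dif_neg hbb]

lemma neg_one_pow_smul_solve {M : Type*} [AddCommGroup M] (e : ℕ) (x y : M)
    (h : ((-1 : ℤ) ^ e) • x + y = 0) : -(((-1 : ℤ) ^ e) • y) = x := by
  have hy : y = -(((-1 : ℤ) ^ e) • x) := eq_neg_of_add_eq_zero_left (by rwa [add_comm] at h)
  rw [hy, smul_neg, smul_smul, ← pow_add, Even.neg_one_pow ⟨e, rfl⟩, one_smul, neg_neg]

lemma mk_rename_P (J : Ideal (MvPolynomial {w : Idn d n // w ≠ m} K))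
    (hJ : ∀ u : Idn d n, 2 ≤ (u.1 \ m.1).card →
      dehom d n K m (primaryRel d n K m u) ∈ J) :
    ∀ (k : ℕ) (w : {w : Idn d n // w ≠ m}), (w.1.1 \ m.1).card ≤ k →
      Ideal.Quotient.mkₐ K J ((MvPolynomial.rename
          (fun b : {w : Idn d n // w ≠ m ∧ (w.1 \ m.1).card = 1} =>
            (⟨b.1, b.2.1⟩ : {w : Idn d n // w ≠ m}))) (P m K w)) =
      Ideal.Quotient.mkₐ K J (MvPolynomial.X w) := by
  intro k
  induction k with
  | zero =>
    intro w hw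
    have := Finset.card_pos.mpr (diff_nonempty w.2)
    omega
  | succ k ih =>
    intro w hw
    by_cases h1 : (w.1.1 \ m.1).card = 1
    · rw [P_basic w h1, MvPolynomial.rename_X]
    · have hne := diff_nonempty w.2
      have hu2 := two_le_card w.2 h1
      have h0 : Ideal.Quotient.mkₐ K J (dehom d n K m (primaryRel d n K m w.1)) = 0 := by
        rw [Ideal.Quotient.mkₐ_eq_mk, Ideal.Quotient.eq_zero_iff_mem]
        exact hJ w.1 hu2
      rw [dehom_eq_aeval, aeval_primaryRel (Qm m K) w.1 hne, Qm_self, one_mul,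
        Qm_ne w.2, map_add, map_zsmul, map_sum] at h0
      rw [P_eq_of_ne w h1, map_neg, map_zsmul, map_sum, map_neg, map_zsmul, map_sum]
      refine neg_one_pow_smul_solve _ _ _ ?_
      rw [← h0]
      congr 1
      refine Finset.sum_congr rfl fun c hc => ?_
      simp only [map_zsmul, map_mul]
      congr 1
      congr 1
      · by_cases hcc : c ∉ w.1.1.erase ((w.1.1 \ m.1).min' hne) ∧
            (insert c (w.1.1.erase ((w.1.1 \ m.1).min' hne))).card = d
        · rw [dif_pos ⟨hc, hcc⟩, dif_pos hcc, Qm_ne (v_ne w.2 h1 hcc.2)]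
          simp only [map_zsmul]
          congr 1
          exact ih ⟨⟨_, hcc.2⟩, v_ne w.2 h1 hcc.2⟩
            (by rw [v_card_lt hne hc]; omega)
        · rw [dif_neg (fun hh => hcc hh.2), dif_neg hcc]
          simp only [map_zero]
      · by_cases hbb : (w.1.1 \ m.1).min' hne ∉ m.1.erase c ∧
            (insert ((w.1.1 \ m.1).min' hne) (m.1.erase c)).card = d
        · rw [dif_pos hbb, dif_pos hbb, Qm_ne (b_ne hne hbb.2)]
          simp only [map_zsmul]
          congr 1
          exact ih ⟨⟨_, hbb.2⟩, b_ne hne hbb.2⟩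
            (by rw [b_card_one hne]; omega)
        · rw [dif_neg hbb, dif_neg hbb]
          simp only [map_zero]

lemma aeval_P_ker (f : MvPolynomial {w : Idn d n // w ≠ m} K)
    (hf : f ∈ Ideal.span {f : MvPolynomial {w : Idn d n // w ≠ m} K |
      ∃ u : Idn d n, 2 ≤ (u.1 \ m.1).card ∧ f = dehom d n K m (primaryRel d n K m u)}) :
    MvPolynomial.aeval (P m K) f = 0 := by
  have hle : Ideal.span {f : MvPolynomial {w : Idn d n // w ≠ m} K |
      ∃ u : Idn d n, 2 ≤ (u.1 \ m.1).card ∧ f = dehom d n K m (primaryRel d n K m u)} ≤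
      RingHom.ker (MvPolynomial.aeval (P m K) :
        MvPolynomial {w : Idn d n // w ≠ m} K →ₐ[K] _) := by
    rw [Ideal.span_le]
    rintro f ⟨u, hu2, rfl⟩
    rw [SetLike.mem_coe, RingHom.mem_ker, dehom_eq_aeval, MvPolynomial.comp_aeval_apply]
    have hfun : (fun i : Idn d n => MvPolynomial.aeval (P m K) (Qm m K i)) =
        (fun w : Idn d n => if h : w = m then
            (1 : MvPolynomial {w : Idn d n // w ≠ m ∧ (w.1 \ m.1).card = 1} K)
          else P m K ⟨w, h⟩) := by
      funext i
      unfold Qm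
      split
      · rw [map_one]
      · rw [MvPolynomial.aeval_X]
    rw [hfun]
    exact Phi_primaryRel_eq_zero u hu2
  exact RingHom.mem_ker.mp (hle hf)

lemma bij_of (J : Ideal (MvPolynomial {w : Idn d n // w ≠ m} K))
    (hJ1 : ∀ u : Idn d n, 2 ≤ (u.1 \ m.1).card →
      dehom d n K m (primaryRel d n K m u) ∈ J)
    (hJ2 : ∀ f ∈ J, MvPolynomial.aeval (P m K) f = 0) :
    Function.Bijective
      ⇑((Ideal.Quotient.mkₐ K J).comp
        (MvPolynomial.rename
          (fun b : {w : Idn d n // w ≠ m ∧ (w.1 \ m.1).card = 1} =>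
            (⟨b.1, b.2.1⟩ : {w : Idn d n // w ≠ m})))) := by
  set ι := fun b : {w : Idn d n // w ≠ m ∧ (w.1 \ m.1).card = 1} =>
    (⟨b.1, b.2.1⟩ : {w : Idn d n // w ≠ m}) with hι
  set ψ := Ideal.Quotient.liftₐ J (MvPolynomial.aeval (P m K)) hJ2 with hψ
  have hψmk : ∀ f, ψ (Ideal.Quotient.mkₐ K J f) = MvPolynomial.aeval (P m K) f :=
    fun f => AlgHom.congr_fun (Ideal.Quotient.liftₐ_comp J _ hJ2) f
  refine Function.bijective_iff_has_inverse.mpr ⟨ψ, ?_, ?_⟩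
  · intro x
    show ψ ((Ideal.Quotient.mkₐ K J) (MvPolynomial.rename ι x)) = x
    rw [hψmk, MvPolynomial.aeval_rename]
    have hPι : (P m K) ∘ ι = MvPolynomial.X := funext fun b => P_basic ⟨b.1, b.2.1⟩ b.2.2
    rw [hPι, MvPolynomial.aeval_X_left_apply]
  · intro y
    obtain ⟨f, rfl⟩ := Ideal.Quotient.mkₐ_surjective K J y
    show ((Ideal.Quotient.mkₐ K J).comp (MvPolynomial.rename ι))
        (ψ (Ideal.Quotient.mkₐ K J f)) = _
    rw [hψmk]
    have hcomp : (((Ideal.Quotient.mkₐ K J).comp (MvPolynomial.rename ι)).comp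
        (MvPolynomial.aeval (P m K)) :
          MvPolynomial {w : Idn d n // w ≠ m} K →ₐ[K] _) = Ideal.Quotient.mkₐ K J := by
      apply MvPolynomial.algHom_ext
      intro w
      rw [AlgHom.comp_apply, MvPolynomial.aeval_X, AlgHom.comp_apply]
      exact mk_rename_P J hJ1 ((w.1.1 \ m.1).card) w le_rfl
    exact AlgHom.congr_fun hcomp f

lemma min'_eq_of_eq_singleton {α : Type*} [LinearOrder α] {s : Finset α} {a : α}
    (hs : s.Nonempty) (h : s = {a}) : s.min' hs = a := by
  subst h
  exact Finset.min'_singleton a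

lemma insert_erase_sdiff {a b : Fin n} (ha : a ∉ m.1) :
    insert a (m.1.erase b) \ m.1 = {a} := by
  rw [Finset.insert_sdiff_of_notMem _ ha,
    Finset.sdiff_eq_empty_iff_subset.mpr (Finset.erase_subset _ _)]
  rfl

lemma m_sdiff_insert {a b : Fin n} (ha : a ∉ m.1) (hb : b ∈ m.1) :
    m.1 \ insert a (m.1.erase b) = {b} := by
  ext x
  simp only [Finset.mem_sdiff, Finset.mem_insert, Finset.mem_erase, Finset.mem_singleton]
  constructor
  · rintro ⟨hxm, hx⟩
    by_contra hxb
    exact hx (Or.inr ⟨hxb, hxm⟩)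
  · rintro rfl
    refine ⟨hb, ?_⟩
    rintro (rfl | ⟨hbb, _⟩)
    exacts [ha hb, hbb rfl]

lemma insert_erase_card {a b : Fin n} (ha : a ∉ m.1) (hb : b ∈ m.1) :
    (insert a (m.1.erase b)).card = d := by
  have hd : 0 < d := by
    rw [← m.2]
    exact Finset.card_pos.mpr ⟨b, hb⟩
  rw [Finset.card_insert_of_notMem (fun hx => ha (Finset.erase_subset _ _ hx)),
    Finset.card_erase_of_mem hb, m.2]
  omega

/-- The basic variables are in bijection with `m.1ᶜ × m.1`. -/
noncomputable def basicEquiv (m : Idn d n) :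
    {w : Idn d n // w ≠ m ∧ (w.1 \ m.1).card = 1} ≃ (↥(m.1ᶜ) × ↥m.1) where
  toFun w :=
    (⟨(w.1.1 \ m.1).min' (diff_nonempty w.2.1),
        Finset.mem_compl.mpr (u0_notMem_m (diff_nonempty w.2.1))⟩,
     ⟨(m.1 \ w.1.1).min' (Finset.card_pos.mp (by
          rw [Finset.card_sdiff_comm (m.2.trans w.1.2.symm), w.2.2]
          exact Nat.one_pos)),
        (Finset.mem_sdiff.mp (Finset.min'_mem _ _)).1⟩)
  invFun p :=
    ⟨⟨insert p.1.1 (m.1.erase p.2.1),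
        insert_erase_card (Finset.mem_compl.mp p.1.2) p.2.2⟩,
      ne_of_diff_nonempty (by
        rw [insert_erase_sdiff (Finset.mem_compl.mp p.1.2)]
        exact ⟨p.1.1, Finset.mem_singleton_self _⟩),
      by rw [insert_erase_sdiff (Finset.mem_compl.mp p.1.2)]; rfl⟩
  left_inv w := by
    obtain ⟨a, ha⟩ := Finset.card_eq_one.mp w.2.2
    have ham : a ∉ m.1 := by
      have : a ∈ w.1.1 \ m.1 := by rw [ha]; exact Finset.mem_singleton_self a
      exact (Finset.mem_sdiff.mp this).2
    have haw : a ∈ w.1.1 := by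
      have : a ∈ w.1.1 \ m.1 := by rw [ha]; exact Finset.mem_singleton_self a
      exact (Finset.mem_sdiff.mp this).1
    obtain ⟨b, hb⟩ := Finset.card_eq_one.mp (show (m.1 \ w.1.1).card = 1 by
      rw [Finset.card_sdiff_comm (m.2.trans w.1.2.symm), w.2.2])
    have hbm : b ∈ m.1 := by
      have : b ∈ m.1 \ w.1.1 := by rw [hb]; exact Finset.mem_singleton_self b
      exact (Finset.mem_sdiff.mp this).1
    have hbw : b ∉ w.1.1 := by
      have : b ∈ m.1 \ w.1.1 := by rw [hb]; exact Finset.mem_singleton_self b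
      exact (Finset.mem_sdiff.mp this).2
    apply Subtype.ext
    apply Subtype.ext
    have hbne : (m.1 \ w.1.1).Nonempty := ⟨b, by rw [hb]; exact Finset.mem_singleton_self b⟩
    change insert ((w.1.1 \ m.1).min' (diff_nonempty w.2.1))
      (m.1.erase ((m.1 \ w.1.1).min' hbne)) = w.1.1
    rw [show ∀ hs, (w.1.1 \ m.1).min' hs = a from fun hs => min'_eq_of_eq_singleton hs ha,
      show ∀ hs, (m.1 \ w.1.1).min' hs = b from fun hs => min'_eq_of_eq_singleton hs hb]
    ext x
    simp only [Finset.mem_insert, Finset.mem_erase]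
    constructor
    · rintro (rfl | ⟨hxb, hxm⟩)
      · exact haw
      · by_contra hxw
        have : x ∈ m.1 \ w.1.1 := Finset.mem_sdiff.mpr ⟨hxm, hxw⟩
        rw [hb, Finset.mem_singleton] at this
        exact hxb this
    · intro hxw
      by_cases hxm : x ∈ m.1
      · refine Or.inr ⟨?_, hxm⟩
        rintro rfl
        exact hbw hxw
      · left
        have : x ∈ w.1.1 \ m.1 := Finset.mem_sdiff.mpr ⟨hxw, hxm⟩
        rw [ha, Finset.mem_singleton] at this
        exact this
  right_inv p := by
    have ham : p.1.1 ∉ m.1 := Finset.mem_compl.mp p.1.2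
    have h1 : insert p.1.1 (m.1.erase p.2.1) \ m.1 = {p.1.1} := insert_erase_sdiff ham
    have h2 : m.1 \ insert p.1.1 (m.1.erase p.2.1) = {p.2.1} := m_sdiff_insert ham p.2.2
    have hne1 : (insert p.1.1 (m.1.erase p.2.1) \ m.1).Nonempty :=
      ⟨p.1.1, by rw [h1]; exact Finset.mem_singleton_self _⟩
    have hne2 : (m.1 \ insert p.1.1 (m.1.erase p.2.1)).Nonempty :=
      ⟨p.2.1, by rw [h2]; exact Finset.mem_singleton_self _⟩
    refine Prod.ext (Subtype.ext ?_) (Subtype.ext ?_)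
    · change (insert p.1.1 (m.1.erase p.2.1) \ m.1).min' hne1 = p.1.1
      exact min'_eq_of_eq_singleton hne1 h1
    · change (m.1 \ insert p.1.1 (m.1.erase p.2.1)).min' hne2 = p.2.1
      exact min'_eq_of_eq_singleton hne2 h2

end Main2

/-- The quotient of the dehomogenized coordinate ring by the ideal generated by
the dehomogenized `m`-primary Plücker relations is, via the basic variables, a polynomial ring
(in `d(n−d)` variables). -/
theorem quotient_primaryIdeal_polynomial_on_basic_variables
    (d n : ℕ) (hd : 1 ≤ d) (hdn : d < n) (K : Type*) [Field K] (m : Idn d n) :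
    Function.Bijective
      ⇑((Ideal.Quotient.mkₐ K
            (Ideal.span {f : MvPolynomial {w : Idn d n // w ≠ m} K |
              ∃ u : Idn d n, 2 ≤ (u.1 \ m.1).card ∧
                f = dehom d n K m (primaryRel d n K m u)})).comp
          (MvPolynomial.rename
            (fun b : {w : Idn d n // w ≠ m ∧ (w.1 \ m.1).card = 1} =>
              (⟨b.1, b.2.1⟩ : {w : Idn d n // w ≠ m})))) ∧
      Fintype.card {w : Idn d n // w ≠ m ∧ (w.1 \ m.1).card = 1} = d * (n - d) := by
  constructor
  · exact bij_of _ (fun u hu => Ideal.subset_span ⟨u, hu, rfl⟩)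
      (fun f hf => aeval_P_ker f hf)
  · rw [Fintype.card_congr (basicEquiv m), Fintype.card_prod, Fintype.card_coe,
      Fintype.card_coe, Finset.card_compl, Fintype.card_fin, m.2]
    exact Nat.mul_comm _ _

end GrassmannianResolution
end

section
/- Fix integers 1 ≤ d < n, a field k and m ∈ I_{d,n}. For every u ∈ I^m_{d,n} there exists a polynomial g in the basic variables only such that x_u − g lies in the ideal of k[x_u : u ∈ I_{d,n} ∖ {m}] generated by the dehomogenized m-primary Plücker relations F̄_{m,v} with v ∈ I^m_{d,n} and |v ∖ m| ≤ |u ∖ m|. -/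
namespace GrassmannianResolution

open MvPolynomial

lemma dehom_X_ne (d n : ℕ) (K : Type*) [CommRing K] (m v : Idn d n) (hvm : v ≠ m) :
    dehom d n K m (X v) = X (⟨v, hvm⟩ : {w : Idn d n // w ≠ m}) := by
  simp [dehom, hvm]

lemma dehom_X_self (d n : ℕ) (K : Type*) [CommRing K] (m : Idn d n) :
    dehom d n K m (X m) = 1 := by
  simp [dehom]

set_option maxHeartbeats 1000000 in
set_option synthInstance.maxHeartbeats 400000 in
/-- Every non-basic dehomogenized Plücker variable `x_u` agrees, modulo the
ideal generated by the dehomogenized `m`-primary relations `F̄_{m,v}` with `|v ∖ m| ≤ |u ∖ m|`,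
with a polynomial in the basic variables only. -/
theorem leading_variable_expressible_in_basic_variables
    (d n : ℕ) (hd : 1 ≤ d) (hdn : d < n) (K : Type*) [Field K] (m : Idn d n)
    (u : Idn d n) (hu : 2 ≤ (u.1 \ m.1).card) :
    ∃ g : MvPolynomial {w : Idn d n // w ≠ m ∧ (w.1 \ m.1).card = 1} K,
      dehom d n K m (MvPolynomial.X u) -
          MvPolynomial.rename
            (fun b : {w : Idn d n // w ≠ m ∧ (w.1 \ m.1).card = 1} =>
              (⟨b.1, b.2.1⟩ : {w : Idn d n // w ≠ m})) g
        ∈ Ideal.span {f : MvPolynomial {w : Idn d n // w ≠ m} K |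
            ∃ v : Idn d n, 2 ≤ (v.1 \ m.1).card ∧ (v.1 \ m.1).card ≤ (u.1 \ m.1).card ∧
              f = dehom d n K m (primaryRel d n K m v)} := by
  classical
  set N := (u.1 \ m.1).card with hN
  set I : Ideal (MvPolynomial {w : Idn d n // w ≠ m} K) := Ideal.span {f |
      ∃ v : Idn d n, 2 ≤ (v.1 \ m.1).card ∧ (v.1 \ m.1).card ≤ N ∧
        f = dehom d n K m (primaryRel d n K m v)} with hI
  set ι : {w : Idn d n // w ≠ m ∧ (w.1 \ m.1).card = 1} → {w : Idn d n // w ≠ m} :=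
    fun b => ⟨b.1, b.2.1⟩ with hι
  set φ : MvPolynomial {w : Idn d n // w ≠ m ∧ (w.1 \ m.1).card = 1} K →ₐ[K]
      (MvPolynomial {w : Idn d n // w ≠ m} K ⧸ I) :=
    (Ideal.Quotient.mkₐ K I).comp (rename ι) with hφ
  have key : ∀ c : ℕ, ∀ v : Idn d n, (v.1 \ m.1).card = c → 1 ≤ c → c ≤ N →
      Ideal.Quotient.mk I (dehom d n K m (X v)) ∈ φ.range := by
    intro c
    induction c using Nat.strong_induction_on with
    | _ c IH =>
    intro v hc h1 hcN
    have hvm : v ≠ m := by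
      intro h
      rw [h, Finset.sdiff_self, Finset.card_empty] at hc
      omega
    rw [dehom_X_ne d n K m v hvm]
    rcases Nat.lt_or_ge c 2 with h2 | h2
    · -- c = 1 : basic variable
      have hc1 : (v.1 \ m.1).card = 1 := by omega
      refine ⟨X ⟨v, hvm, hc1⟩, ?_⟩
      simp [hφ, hι]
    -- c ≥ 2 : use the primary relation
    have hne : (v.1 \ m.1).Nonempty := Finset.card_pos.mp (by omega)
    have hv₀mem : (v.1 \ m.1).min' hne ∈ v.1 \ m.1 := Finset.min'_mem _ _
    set v₀ := (v.1 \ m.1).min' hne with hv₀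
    have hv₀v : v₀ ∈ v.1 := (Finset.mem_sdiff.mp hv₀mem).1
    have hv₀m : v₀ ∉ m.1 := (Finset.mem_sdiff.mp hv₀mem).2
    set ur := v.1.erase v₀ with hur
    set e := (ur.filter fun x => v₀ < x).card with he
    -- the central coordinate of the primary relation
    have hins : insert v₀ ur = v.1 := Finset.insert_erase hv₀v
    have hpxa : pxa d n K ur v₀ = ((-1 : ℤ) ^ e) • X v := by
      rw [pxa, dif_pos ⟨Finset.notMem_erase _ _, by rw [hins]; exact v.2⟩]
      congr 1
      exact congrArg X (Subtype.ext hins)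
    -- expansion of the dehomogenized primary relation
    have hexp : dehom d n K m (primaryRel d n K m v)
        = ((-1 : ℤ) ^ e) • X (⟨v, hvm⟩ : {w : Idn d n // w ≠ m})
          + ∑ c' ∈ m.1, ((-1 : ℤ) ^ (m.1.filter fun x => x ≤ c').card) •
              (dehom d n K m (pxa d n K ur c') *
                dehom d n K m (pax d n K v₀ (m.1.erase c'))) := by
      rw [primaryRel, dif_pos hne, ← hv₀, ← hur, map_add, map_mul, map_sum, hpxa,
        dehom_X_self, map_zsmul, dehom_X_ne d n K m v hvm, one_mul]
      congr 1
      refine Finset.sum_congr rfl fun c' _ => ?_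
      rw [map_zsmul, map_mul]
    have hrel : Ideal.Quotient.mk I (dehom d n K m (primaryRel d n K m v)) = 0 := by
      rw [Ideal.Quotient.eq_zero_iff_mem]
      exact Ideal.subset_span ⟨v, by omega, by omega, rfl⟩
    rw [hexp, map_add, map_zsmul] at hrel
    have hXeq : Ideal.Quotient.mk I (X (⟨v, hvm⟩ : {w : Idn d n // w ≠ m}))
        = ((-1 : ℤ) ^ e) • (- Ideal.Quotient.mk I
            (∑ c' ∈ m.1, ((-1 : ℤ) ^ (m.1.filter fun x => x ≤ c').card) •
              (dehom d n K m (pxa d n K ur c') *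
                dehom d n K m (pax d n K v₀ (m.1.erase c'))))) := by
      have hsq : ((-1 : ℤ) ^ e) • ((-1 : ℤ) ^ e) •
          Ideal.Quotient.mk I (X (⟨v, hvm⟩ : {w : Idn d n // w ≠ m}))
          = Ideal.Quotient.mk I (X (⟨v, hvm⟩ : {w : Idn d n // w ≠ m})) := by
        rw [smul_smul, ← pow_add, Even.neg_one_pow ⟨e, rfl⟩, one_smul]
      rw [← hsq, eq_neg_of_add_eq_zero_left hrel]
    rw [hXeq]
    refine zsmul_mem (neg_mem ?_) _
    rw [map_sum]
    refine sum_mem fun c' hc' => ?_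
    rw [map_zsmul, map_mul]
    refine zsmul_mem (mul_mem ?_ ?_) _
    · -- the pxa factor: a variable with smaller |w \ m|, or zero
      by_cases hcond : c' ∉ ur ∧ (insert c' ur).card = d
      · rw [pxa, dif_pos hcond]
        set w : Idn d n := ⟨insert c' ur, hcond.2⟩ with hw
        have hwdiff : w.1 \ m.1 = (v.1 \ m.1).erase v₀ := by
          show insert c' ur \ m.1 = _
          rw [Finset.insert_sdiff_of_mem _ hc', hur, Finset.erase_sdiff_comm]
        have hwcard : (w.1 \ m.1).card = c - 1 := by
          rw [hwdiff, Finset.card_erase_of_mem hv₀mem, hc]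
        have hwm : w ≠ m := by
          intro h
          rw [h, Finset.sdiff_self, Finset.card_empty] at hwcard
          omega
        rw [map_zsmul, map_zsmul]
        refine zsmul_mem ?_ _
        exact IH (c - 1) (by omega) w hwcard (by omega) (by omega)
      · rw [pxa, dif_neg hcond, map_zero, map_zero]
        exact zero_mem _
    · -- the pax factor: a basic variable, or zero
      have hv₀e : v₀ ∉ m.1.erase c' := fun h => hv₀m (Finset.mem_of_mem_erase h)
      have hcard2 : (insert v₀ (m.1.erase c')).card = d := by
        rw [Finset.card_insert_of_notMem hv₀e, Finset.card_erase_of_mem hc', m.2]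
        omega
      rw [pax, dif_pos ⟨hv₀e, hcard2⟩]
      set w' : Idn d n := ⟨insert v₀ (m.1.erase c'), hcard2⟩ with hw'
      have hw'diff : w'.1 \ m.1 = {v₀} := by
        show insert v₀ (m.1.erase c') \ m.1 = _
        rw [Finset.insert_sdiff_of_notMem _ hv₀m,
          Finset.sdiff_eq_empty_iff_subset.mpr (Finset.erase_subset _ _),
          ]
        rfl
      have hw'card : (w'.1 \ m.1).card = 1 := by rw [hw'diff]; rfl
      have hw'm : w' ≠ m := by
        intro h
        rw [h, Finset.sdiff_self, Finset.card_empty] at hw'card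
        omega
      rw [map_zsmul, map_zsmul]
      refine zsmul_mem ?_ _
      rw [dehom_X_ne d n K m w' hw'm]
      exact ⟨X ⟨w', hw'm, hw'card⟩, by simp [hφ, hι]⟩
  obtain ⟨g, hg⟩ := key N u hN.symm (by omega) le_rfl
  refine ⟨g, ?_⟩
  rw [← Ideal.Quotient.eq]
  rw [hφ] at hg
  simpa using hg.symm

end GrassmannianResolution
end

section
/- Fix integers 1 ≤ d < n, a field k and m ∈ I_{d,n}. For u ∈ I^m_{d,n} call |u ∖ m| − 2 the rank of u. Let u ∈ I^m_{d,n} have rank r. Then the leading variable x_u does not occur in the dehomogenized m-primary Plücker relation F̄_{m,v} (i.e. F̄_{m,v} has degree 0 in the variable x_u) for every v ∈ I^m_{d,n} with rank(v) < r, and also for every v ∈ I^m_{d,n} with rank(v) = r and v ≠ u. -/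
namespace GrassmannianResolution

lemma degreeOf_zsmul_le {σ : Type*} {K : Type*} [CommRing K] (z : ℤ) (i : σ)
    (p : MvPolynomial σ K) :
    MvPolynomial.degreeOf i (z • p) ≤ MvPolynomial.degreeOf i p := by
  rw [zsmul_eq_mul, ← map_intCast (MvPolynomial.C : K →+* MvPolynomial σ K)]
  exact MvPolynomial.degreeOf_C_mul_le p i _

lemma degreeOf_dehom_X (d n : ℕ) (K : Type*) [Field K] (m u : Idn d n) (hum : u ≠ m)
    (w : Idn d n) (hw : w ≠ u) :
    MvPolynomial.degreeOf (⟨u, hum⟩ : {w : Idn d n // w ≠ m})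
      (dehom d n K m (MvPolynomial.X w)) = 0 := by
  classical
  rw [dehom, MvPolynomial.aeval_X]
  split_ifs with h
  · simpa using MvPolynomial.degreeOf_C (1 : K) (⟨u, hum⟩ : {w : Idn d n // w ≠ m})
  · rw [MvPolynomial.degreeOf_X, if_neg]
    intro hc
    exact hw (congrArg Subtype.val hc).symm

lemma degreeOf_dehom_pxa (d n : ℕ) (K : Type*) [Field K] (m u : Idn d n) (hum : u ≠ m)
    (s : Finset (Fin n)) (a : Fin n) (hne : insert a s ≠ u.1) :
    MvPolynomial.degreeOf (⟨u, hum⟩ : {w : Idn d n // w ≠ m})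
      (dehom d n K m (pxa d n K s a)) = 0 := by
  rw [pxa]
  split_ifs with h
  · rw [map_zsmul]
    refine Nat.le_zero.mp ?_
    calc MvPolynomial.degreeOf _ _ ≤ _ := degreeOf_zsmul_le _ _ _
    _ = 0 := degreeOf_dehom_X d n K m u hum _ (fun hc => hne (congrArg Subtype.val hc))
  · simp

lemma degreeOf_dehom_pax (d n : ℕ) (K : Type*) [Field K] (m u : Idn d n) (hum : u ≠ m)
    (a : Fin n) (s : Finset (Fin n)) (hne : insert a s ≠ u.1) :
    MvPolynomial.degreeOf (⟨u, hum⟩ : {w : Idn d n // w ≠ m})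
      (dehom d n K m (pax d n K a s)) = 0 := by
  rw [pax]
  split_ifs with h
  · rw [map_zsmul]
    refine Nat.le_zero.mp ?_
    calc MvPolynomial.degreeOf _ _ ≤ _ := degreeOf_zsmul_le _ _ _
    _ = 0 := degreeOf_dehom_X d n K m u hum _ (fun hc => hne (congrArg Subtype.val hc))
  · simp

/-- The leading variable `x_u` of the dehomogenized `m`-primary relation
`F̄_{m,u}` does not occur in any `F̄_{m,v}` of strictly smaller rank, nor in any `F̄_{m,v}` of
the same rank with `v ≠ u`.  (The rank of `v ∈ I^m_{d,n}` is `|v ∖ m| − 2`.) -/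
theorem leading_variable_not_in_lower_rank_relations
    (d n : ℕ) (hd : 1 ≤ d) (hdn : d < n) (K : Type*) [Field K] (m : Idn d n)
    (u : Idn d n) (hu : 2 ≤ (u.1 \ m.1).card)
    (v : Idn d n) (hv : 2 ≤ (v.1 \ m.1).card)
    (hrk : (v.1 \ m.1).card - 2 < (u.1 \ m.1).card - 2 ∨
      ((v.1 \ m.1).card - 2 = (u.1 \ m.1).card - 2 ∧ v ≠ u)) :
    MvPolynomial.degreeOf (⟨u, by rintro rfl; simp at hu⟩ : {w : Idn d n // w ≠ m})
      (dehom d n K m (primaryRel d n K m v)) = 0 := by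
  classical
  have hum : u ≠ m := by rintro rfl; simp at hu
  -- basic facts from the rank hypothesis
  have hcard : (v.1 \ m.1).card ≤ (u.1 \ m.1).card := by omega
  have hvu : v ≠ u := by
    rcases hrk with h | ⟨_, h⟩
    · intro hc; subst hc; omega
    · exact h
  have hne : (v.1 \ m.1).Nonempty := Finset.card_pos.mp (by omega)
  set v0 := (v.1 \ m.1).min' hne with hv0
  have hv0mem : v0 ∈ v.1 \ m.1 := Finset.min'_mem _ _
  have hv0v : v0 ∈ v.1 := (Finset.mem_sdiff.mp hv0mem).1
  have hv0nm : v0 ∉ m.1 := (Finset.mem_sdiff.mp hv0mem).2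
  set vr := v.1.erase v0 with hvr
  have hins : insert v0 vr = v.1 := Finset.insert_erase hv0v
  -- key inequalities on the occurring variables
  have key1 : insert v0 vr ≠ u.1 := by
    rw [hins]; intro hc; exact hvu (Subtype.ext hc)
  have key2 : ∀ c ∈ m.1, insert c vr ≠ u.1 := by
    intro c hc hceq
    have hsub : u.1 \ m.1 ⊆ (v.1 \ m.1).erase v0 := by
      rw [← hceq]
      intro x hx
      rcases Finset.mem_sdiff.mp hx with ⟨hx1, hx2⟩
      rcases Finset.mem_insert.mp hx1 with rfl | hx1
      · exact absurd hc hx2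
      · rw [hvr] at hx1
        exact Finset.mem_erase.mpr ⟨(Finset.mem_erase.mp hx1).1,
          Finset.mem_sdiff.mpr ⟨(Finset.mem_erase.mp hx1).2, hx2⟩⟩
    have := Finset.card_le_card hsub
    rw [Finset.card_erase_of_mem hv0mem] at this
    omega
  have key3 : ∀ c ∈ m.1, insert v0 (m.1.erase c) ≠ u.1 := by
    intro c _ hceq
    have hsub : u.1 \ m.1 ⊆ {v0} := by
      rw [← hceq]
      intro x hx
      rcases Finset.mem_sdiff.mp hx with ⟨hx1, hx2⟩
      rcases Finset.mem_insert.mp hx1 with rfl | hx1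
      · exact Finset.mem_singleton_self _
      · exact absurd (Finset.mem_of_mem_erase hx1) hx2
    have := Finset.card_le_card hsub
    simp at this
    omega
  -- unfold the relation and bound the degree
  rw [primaryRel, dif_pos hne, map_add, map_mul, map_sum]
  refine Nat.le_zero.mp ((MvPolynomial.degreeOf_add_le _ _ _).trans ?_)
  rw [Nat.le_zero, Nat.max_eq_zero_iff]
  constructor
  · refine Nat.le_zero.mp ((MvPolynomial.degreeOf_mul_le _ _ _).trans ?_)
    rw [degreeOf_dehom_X d n K m u hum m (fun hc => hum hc.symm),
      degreeOf_dehom_pxa d n K m u hum _ _ key1]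
  · refine Nat.le_zero.mp ((MvPolynomial.degreeOf_sum_le _ _ _).trans ?_)
    refine Finset.sup_le fun c hc => ?_
    rw [map_zsmul]
    refine (degreeOf_zsmul_le _ _ _).trans ?_
    rw [map_mul]
    refine (MvPolynomial.degreeOf_mul_le _ _ _).trans ?_
    rw [degreeOf_dehom_pxa d n K m u hum _ _ (key2 c hc),
      degreeOf_dehom_pax d n K m u hum _ _ (key3 c hc)]

end GrassmannianResolution
end

section
/- Fix integers 1 ≤ d < n, a field k, m ∈ I_{d,n} and u ∈ I^m_{d,n}. In the expansion of the m-primary Plücker relation F_{m,u} in the monomial basis of k[p_w : w ∈ I_{d,n}], the leading monomial p_m·p_u occurs with coefficient ±1; among the d products p_{u^r m_i}·p_{u_0(m ∖ m_i)} (1 ≤ i ≤ d), exactly those with m_i ∉ u are nonzero, and there are exactly |u ∖ m| of them; all of these nonzero monomials are pairwise distinct and distinct from p_m·p_u. Consequently F_{m,u} has exactly 1 + |u ∖ m| nonzero terms; writing 𝔱_F + 1 for the number of nonzero terms of F and rank(F) := 𝔱_F − 2, one has rank(F_{m,u}) = |u ∖ m| − 2 and 0 ≤ rank(F_{m,u})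 ≤ d − 2. -/
namespace GrassmannianResolution

/-- The term `p_{u^r m_i} · p_{u₀ (m ∖ m_i)}` of the `m`-primary relation `F_{m,u}`
corresponding to `c = m_i ∈ m`. -/
noncomputable def primaryTerm (d n : ℕ) (K : Type*) [CommRing K] (m u : Idn d n) (c : Fin n) :
    MvPolynomial (Idn d n) K :=
  if h : (u.1 \ m.1).Nonempty then
    pxa d n K (u.1.erase ((u.1 \ m.1).min' h)) c *
      pax d n K ((u.1 \ m.1).min' h) (m.1.erase c)
  else 0

theorem pair_single_eq {α : Type*} [DecidableEq α] {a b c d : α}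
    (h : Finsupp.single a 1 + Finsupp.single b 1 = Finsupp.single c 1 + Finsupp.single d 1) :
    (a = c ∧ b = d) ∨ (a = d ∧ b = c) := by
  have h2 := congrArg Finsupp.toMultiset h
  simp only [Finsupp.toMultiset_add, Finsupp.toMultiset_single, Multiset.replicate_one,
    one_smul] at h2
  have hm : a ::ₘ {b} = c ::ₘ {d} := h2
  rw [Multiset.cons_eq_cons] at hm
  rcases hm with ⟨rfl, hb⟩ | ⟨hne, cs, h1, h3⟩
  · left; exact ⟨rfl, Multiset.singleton_inj.mp hb⟩
  · have hcs : cs = 0 := by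
      have := congrArg Multiset.card h1
      simpa using this
    subst hcs
    right
    exact ⟨Multiset.singleton_inj.mp h3.symm, Multiset.singleton_inj.mp h1⟩

/-- Structure of the monomial expansion of the `m`-primary Plücker relation
`F_{m,u}`: the leading monomial `p_m p_u` has coefficient `±1`; among the `d` products
`p_{u^r m_i} p_{u₀(m∖m_i)}` exactly those with `m_i ∉ u` are nonzero (and there are `|u∖m|`
of them); all these monomials are pairwise distinct and distinct from `p_m p_u`; so `F_{m,u}`
has exactly `1 + |u∖m|` nonzero terms, its rank is `|u∖m| − 2`, and `0 ≤ rank ≤ d−2`. -/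
theorem primaryRel_expansion
    (d n : ℕ) (hd : 1 ≤ d) (hdn : d < n) (K : Type*) [Field K]
    (m u : Idn d n) (hu : 2 ≤ (u.1 \ m.1).card) :
    (MvPolynomial.coeff (Finsupp.single m 1 + Finsupp.single u 1) (primaryRel d n K m u) = 1 ∨
      MvPolynomial.coeff (Finsupp.single m 1 + Finsupp.single u 1) (primaryRel d n K m u) = -1) ∧
    (∀ c ∈ m.1, (primaryTerm d n K m u c ≠ 0 ↔ c ∉ u.1)) ∧
    (m.1.filter fun c => c ∉ u.1).card = (u.1 \ m.1).card ∧
    (∀ c ∈ m.1, c ∉ u.1 → ∀ c' ∈ m.1, c' ∉ u.1 → c ≠ c' →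
      Disjoint (primaryTerm d n K m u c).support (primaryTerm d n K m u c').support) ∧
    (∀ c ∈ m.1, c ∉ u.1 →
      (Finsupp.single m 1 + Finsupp.single u 1) ∉ (primaryTerm d n K m u c).support) ∧
    (primaryRel d n K m u).support.card = 1 + (u.1 \ m.1).card ∧
    (primaryRel d n K m u).support.card - 3 = (u.1 \ m.1).card - 2 ∧
    (u.1 \ m.1).card - 2 ≤ d - 2 := by

  classical
  have hn : (u.1 \ m.1).Nonempty := Finset.card_pos.mp (by omega)
  set u0 := (u.1 \ m.1).min' hn with hu0def
  have hu0s : u0 ∈ u.1 \ m.1 := Finset.min'_mem _ hn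
  have hu0u : u0 ∈ u.1 := (Finset.mem_sdiff.mp hu0s).1
  have hu0m : u0 ∉ m.1 := (Finset.mem_sdiff.mp hu0s).2
  set ur := u.1.erase u0 with hurdef
  have hud : u.1.card = d := u.2
  have hmd : m.1.card = d := m.2
  have hurcard : ur.card = d - 1 := by rw [hurdef, Finset.card_erase_of_mem hu0u, hud]
  -- primaryTerm in terms of the abbreviations
  have hTerm : ∀ c, primaryTerm d n K m u c =
      pxa d n K ur c * pax d n K u0 (m.1.erase c) := by
    intro c
    rw [primaryTerm, dif_pos hn]
  -- zero terms
  have hzero : ∀ c : Fin n, (c ∉ m.1 ∨ c ∈ u.1) → primaryTerm d n K m u c = 0 := by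
    intro c hc
    rw [hTerm]
    by_cases hcm : c ∈ m.1
    · have hcu : c ∈ u.1 := hc.resolve_left (fun h => h hcm)
      have hcur : c ∈ ur := Finset.mem_erase.mpr ⟨fun h => hu0m (h ▸ hcm), hcu⟩
      have hcond : ¬ (c ∉ ur ∧ (insert c ur).card = d) := fun h => h.1 hcur
      rw [pxa, dif_neg hcond, zero_mul]
    · have hcond : ¬ (u0 ∉ m.1.erase c ∧ (insert u0 (m.1.erase c)).card = d) := by
        intro ⟨h1, h2⟩
        rw [Finset.erase_eq_of_notMem hcm, Finset.card_insert_of_notMem hu0m, hmd] at h2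
        omega
      rw [pax, dif_neg hcond, mul_zero]
  -- key monomial form
  have hXX : ∀ w w' : Idn d n, (MvPolynomial.X w * MvPolynomial.X w' :
      MvPolynomial (Idn d n) K) =
      MvPolynomial.monomial (Finsupp.single w 1 + Finsupp.single w' 1) 1 := by
    intro w w'
    rw [MvPolynomial.X, MvPolynomial.X, MvPolynomial.monomial_mul, one_mul]
  have key : ∀ c, c ∈ m.1 → c ∉ u.1 → ∃ (w w' : Idn d n) (z : K),
      w.1 = insert c ur ∧ w'.1 = insert u0 (m.1.erase c) ∧ (z = 1 ∨ z = -1) ∧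
      primaryTerm d n K m u c =
        MvPolynomial.monomial (Finsupp.single w 1 + Finsupp.single w' 1) z := by
    intro c hcm hcu
    have hcur : c ∉ ur := fun h => hcu (Finset.mem_of_mem_erase h)
    have h1 : (insert c ur).card = d := by
      rw [Finset.card_insert_of_notMem hcur, hurcard]; omega
    have hu0mc : u0 ∉ m.1.erase c := fun h => hu0m (Finset.mem_of_mem_erase h)
    have h2 : (insert u0 (m.1.erase c)).card = d := by
      rw [Finset.card_insert_of_notMem hu0mc, Finset.card_erase_of_mem hcm, hmd]; omega
    refine ⟨⟨_, h1⟩, ⟨_, h2⟩,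
      ((-1 : ℤ) ^ (ur.filter fun x => c < x).card *
        (-1 : ℤ) ^ ((m.1.erase c).filter fun x => x < u0).card) • (1 : K), rfl, rfl, ?_, ?_⟩
    · rcases neg_one_pow_eq_or ℤ (ur.filter fun x => c < x).card with ha | ha <;>
        rcases neg_one_pow_eq_or ℤ ((m.1.erase c).filter fun x => x < u0).card with hb | hb <;>
          rw [ha, hb] <;> norm_num
    · rw [hTerm, pxa, dif_pos ⟨hcur, h1⟩, pax, dif_pos ⟨hu0mc, h2⟩,
        smul_mul_smul_comm, hXX, MvPolynomial.smul_monomial]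
  -- leading monomial
  have hmain : ∃ z0 : K, (z0 = 1 ∨ z0 = -1) ∧
      MvPolynomial.X m * pxa d n K ur u0 =
        MvPolynomial.monomial (Finsupp.single m 1 + Finsupp.single u 1) z0 := by
    have hcond : u0 ∉ ur ∧ (insert u0 ur).card = d := by
      refine ⟨Finset.notMem_erase _ _, ?_⟩
      rw [hurdef, Finset.insert_erase hu0u, hud]
    refine ⟨((-1 : ℤ) ^ (ur.filter fun x => u0 < x).card) • (1 : K), ?_, ?_⟩
    · rcases neg_one_pow_eq_or ℤ (ur.filter fun x => u0 < x).card with ha | ha <;>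
        rw [ha] <;> norm_num
    · rw [pxa, dif_pos hcond]
      have heq : (⟨insert u0 ur, hcond.2⟩ : Idn d n) = u :=
        Subtype.ext (Finset.insert_erase hu0u)
      rw [heq, mul_smul_comm, hXX, MvPolynomial.smul_monomial]
  obtain ⟨z0, hz0, hleadeq⟩ := hmain
  choose w w' z hw hw' hz hmon using key
  -- injectivity of signatures
  have hsig_ne : ∀ c (hc : c ∈ m.1) (hcu : c ∉ u.1) c' (hc' : c' ∈ m.1) (hcu' : c' ∉ u.1),
      c ≠ c' →
      (Finsupp.single (w c hc hcu) 1 + Finsupp.single (w' c hc hcu) 1 : Idn d n →₀ ℕ) ≠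
        Finsupp.single (w c' hc' hcu') 1 + Finsupp.single (w' c' hc' hcu') 1 := by
    intro c hc hcu c' hc' hcu' hne h
    rcases pair_single_eq h with ⟨h1, _⟩ | ⟨h1, _⟩
    · have hv : insert c ur = insert c' ur := by
        rw [← hw c hc hcu, ← hw c' hc' hcu', h1]
      have : c ∈ insert c' ur := hv ▸ Finset.mem_insert_self c ur
      rcases Finset.mem_insert.mp this with h | h
      · exact hne h
      · exact hcu (Finset.mem_of_mem_erase h)
    · have hv : insert c ur = insert u0 (m.1.erase c') := by
        rw [← hw c hc hcu, ← hw' c' hc' hcu', h1]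
      have : u0 ∈ insert c ur := hv ▸ Finset.mem_insert_self u0 _
      rcases Finset.mem_insert.mp this with h | h
      · exact hu0m (h ▸ hc)
      · exact Finset.notMem_erase u0 u.1 h
  have hsig_ne0 : ∀ c (hc : c ∈ m.1) (hcu : c ∉ u.1),
      (Finsupp.single (w c hc hcu) 1 + Finsupp.single (w' c hc hcu) 1 : Idn d n →₀ ℕ) ≠
        Finsupp.single m 1 + Finsupp.single u 1 := by
    intro c hc hcu h
    rcases pair_single_eq h with ⟨h1, _⟩ | ⟨_, h2⟩
    · -- w c = m : insert c ur = m.1, but ∃ x ∈ u\m, x ≠ u0, x ∈ ur ⊆ m.1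
      obtain ⟨x, hx, hxne⟩ := Finset.exists_mem_ne (by omega :
        1 < (u.1 \ m.1).card) u0
      have hxur : x ∈ ur :=
        Finset.mem_erase.mpr ⟨hxne, (Finset.mem_sdiff.mp hx).1⟩
      have : x ∈ m.1 := by
        have hv : insert c ur = m.1 := by rw [← hw c hc hcu, h1]
        exact hv ▸ Finset.mem_insert_of_mem hxur
      exact (Finset.mem_sdiff.mp hx).2 this
    · -- w' c = m : u0 ∈ m.1
      have hv : insert u0 (m.1.erase c) = m.1 := by rw [← hw' c hc hcu, h2]
      exact hu0m (hv ▸ Finset.mem_insert_self u0 _)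
  have hzK : ∀ c (hc : c ∈ m.1) (hcu : c ∉ u.1), z c hc hcu ≠ 0 := by
    intro c hc hcu
    rcases hz c hc hcu with h | h <;> rw [h] <;> simp
  have hz0ne : z0 ≠ 0 := by rcases hz0 with rfl | rfl <;> simp
  have hzne : ∀ (e : ℕ) (zz : K), (zz = 1 ∨ zz = -1) → ((-1 : ℤ) ^ e • zz ≠ 0) := by
    intro e zz hzz
    rcases neg_one_pow_eq_or ℤ e with h | h <;> rcases hzz with rfl | rfl <;> rw [h] <;> simp
  have hgeq : ∀ c (hc : c ∈ m.1) (hcu : c ∉ u.1),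
      ((-1 : ℤ) ^ ((m.1.filter fun x => x ≤ c).card)) • primaryTerm d n K m u c =
        MvPolynomial.monomial
          (Finsupp.single (w c hc hcu) 1 + Finsupp.single (w' c hc hcu) 1)
          (((-1 : ℤ) ^ ((m.1.filter fun x => x ≤ c).card)) • z c hc hcu) := by
    intro c hc hcu
    rw [hmon c hc hcu, MvPolynomial.smul_monomial]
  have hgsupp : ∀ c (hc : c ∈ m.1) (hcu : c ∉ u.1),
      (((-1 : ℤ) ^ ((m.1.filter fun x => x ≤ c).card)) •
          primaryTerm d n K m u c).support =
        {Finsupp.single (w c hc hcu) 1 + Finsupp.single (w' c hc hcu) 1} := by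
    intro c hc hcu
    rw [hgeq c hc hcu, MvPolynomial.support_monomial,
      if_neg (hzne _ _ (hz c hc hcu))]
  have hgdisj : ∀ c c' : Fin n, c ≠ c' → Disjoint
      (((-1 : ℤ) ^ ((m.1.filter fun x => x ≤ c).card)) •
        primaryTerm d n K m u c).support
      (((-1 : ℤ) ^ ((m.1.filter fun x => x ≤ c').card)) •
        primaryTerm d n K m u c').support := by
    intro c c' hne
    by_cases hc : c ∈ m.1 ∧ c ∉ u.1
    · by_cases hc' : c' ∈ m.1 ∧ c' ∉ u.1
      · rw [hgsupp c hc.1 hc.2, hgsupp c' hc'.1 hc'.2, Finset.disjoint_singleton]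
        exact hsig_ne c hc.1 hc.2 c' hc'.1 hc'.2 hne
      · rw [hzero c' (by tauto), smul_zero]
        simp
    · rw [hzero c (by tauto), smul_zero]
      simp
  have hrel : primaryRel d n K m u =
      MvPolynomial.monomial (Finsupp.single m 1 + Finsupp.single u 1) z0 +
        ∑ c ∈ m.1, ((-1 : ℤ) ^ ((m.1.filter fun x => x ≤ c).card)) •
          primaryTerm d n K m u c := by
    rw [primaryRel, dif_pos hn, ← hleadeq]
    refine congrArg₂ (· + ·) rfl (Finset.sum_congr rfl fun c hc => ?_)
    rw [hTerm]
  have hsum_supp : (∑ c ∈ m.1, ((-1 : ℤ) ^ ((m.1.filter fun x => x ≤ c).card)) •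
        primaryTerm d n K m u c).support =
      m.1.biUnion (fun c => (((-1 : ℤ) ^ ((m.1.filter fun x => x ≤ c).card)) •
        primaryTerm d n K m u c).support) :=
    by have := Finsupp.support_sum_eq_biUnion m.1 hgdisj; rwa [← AddMonoidAlgebra.coeff_sum] at this
  have hlead_not : (Finsupp.single m 1 + Finsupp.single u 1) ∉
      m.1.biUnion (fun c => (((-1 : ℤ) ^ ((m.1.filter fun x => x ≤ c).card)) •
        primaryTerm d n K m u c).support) := by
    intro hmem
    obtain ⟨c, hc, hmem⟩ := Finset.mem_biUnion.mp hmem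
    by_cases hcu : c ∈ u.1
    · rw [hzero c (Or.inr hcu), smul_zero] at hmem
      simp at hmem
    · rw [hgsupp c hc hcu] at hmem
      exact hsig_ne0 c hc hcu (Finset.mem_singleton.mp hmem).symm
  have hdisj0 : Disjoint ((MvPolynomial.monomial
      (Finsupp.single m 1 + Finsupp.single u 1) z0).support)
      ((∑ c ∈ m.1, ((-1 : ℤ) ^ ((m.1.filter fun x => x ≤ c).card)) •
        primaryTerm d n K m u c).support) := by
    rw [MvPolynomial.support_monomial, if_neg hz0ne, hsum_supp]
    exact Finset.disjoint_singleton_left.mpr hlead_not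
  have hrel_supp : (primaryRel d n K m u).support =
      {(Finsupp.single m 1 + Finsupp.single u 1 : Idn d n →₀ ℕ)} ∪
        m.1.biUnion (fun c => (((-1 : ℤ) ^ ((m.1.filter fun x => x ≤ c).card)) •
          primaryTerm d n K m u c).support) := by
    rw [hrel]
    have hadd : ((MvPolynomial.monomial (Finsupp.single m 1 + Finsupp.single u 1) z0 +
        ∑ c ∈ m.1, ((-1 : ℤ) ^ ((m.1.filter fun x => x ≤ c).card)) •
          primaryTerm d n K m u c).support) =
      (MvPolynomial.monomial (Finsupp.single m 1 + Finsupp.single u 1) z0).support ∪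
        (∑ c ∈ m.1, ((-1 : ℤ) ^ ((m.1.filter fun x => x ≤ c).card)) •
          primaryTerm d n K m u c).support := Finsupp.support_add_eq hdisj0
    rw [hadd, MvPolynomial.support_monomial, if_neg hz0ne, hsum_supp]
  have hcard3 : (m.1.filter fun c => c ∉ u.1).card = (u.1 \ m.1).card := by
    have h1 : m.1.filter (fun c => c ∉ u.1) = m.1 \ u.1 :=
      (Finset.sdiff_eq_filter m.1 u.1).symm
    have h2 := Finset.card_sdiff_add_card_inter m.1 u.1
    have h3 := Finset.card_sdiff_add_card_inter u.1 m.1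
    rw [Finset.inter_comm] at h3
    rw [h1]
    omega
  have hcard6 : (primaryRel d n K m u).support.card = 1 + (u.1 \ m.1).card := by
    rw [hrel_supp, Finset.card_union_of_disjoint
      (Finset.disjoint_singleton_left.mpr hlead_not), Finset.card_singleton,
      Finset.card_biUnion (fun x _ y _ hxy => hgdisj x y hxy)]
    congr 1
    rw [← hcard3, Finset.card_filter]
    refine Finset.sum_congr rfl fun c hc => ?_
    by_cases hcu : c ∈ u.1
    · rw [hzero c (Or.inr hcu), smul_zero, if_neg (by simpa using hcu)]
      simp
    · rw [hgsupp c hc hcu, if_pos hcu, Finset.card_singleton]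
  have hcoeff : MvPolynomial.coeff (Finsupp.single m 1 + Finsupp.single u 1)
      (primaryRel d n K m u) = z0 := by
    rw [hrel, MvPolynomial.coeff_add, MvPolynomial.coeff_monomial, if_pos rfl,
      MvPolynomial.coeff_sum, Finset.sum_eq_zero, add_zero]
    intro c hc
    by_cases hcu : c ∈ u.1
    · rw [hzero c (Or.inr hcu), smul_zero, MvPolynomial.coeff_zero]
    · rw [hgeq c hc hcu, MvPolynomial.coeff_monomial, if_neg (hsig_ne0 c hc hcu)]
  refine ⟨hz0.imp (fun h => hcoeff.trans h) (fun h => hcoeff.trans h), ?_, hcard3,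
    ?_, ?_, hcard6, by rw [hcard6]; omega, ?_⟩
  · intro c hc
    constructor
    · intro h hcu
      exact h (hzero c (Or.inr hcu))
    · intro hcu h0
      rw [hmon c hc hcu, MvPolynomial.monomial_eq_zero] at h0
      exact hzK c hc hcu h0
  · intro c hc hcu c' hc' hcu' hne
    rw [hmon c hc hcu, hmon c' hc' hcu', MvPolynomial.support_monomial,
      if_neg (hzK c hc hcu), MvPolynomial.support_monomial, if_neg (hzK c' hc' hcu'),
      Finset.disjoint_singleton]
    exact hsig_ne c hc hcu c' hc' hcu' hne
  · intro c hc hcu h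
    rw [hmon c hc hcu, MvPolynomial.support_monomial, if_neg (hzK c hc hcu)] at h
    exact hsig_ne0 c hc hcu (Finset.mem_singleton.mp h).symm
  · have h1 : (u.1 \ m.1).card ≤ u.1.card := Finset.card_le_card Finset.sdiff_subset
    rw [hud] at h1
    omega


end GrassmannianResolution
end

section
/- Fix integers 1 ≤ d < n, a field k, m ∈ I_{d,n}, and an m-primary Plücker relation F = F_{m,u} with u ∈ I^m_{d,n}. Then for any two distinct indices s ≠ t in S_F, the pairs {u_s, v_s} and {u_t, v_t} are disjoint subsets of I_{d,n}. In particular, distinct elements of Λ_F are disjoint two-element sets, each element of I_{d,n} occurs in at most one pair of Λ_F, and within a pair {u_s, v_s} each of u_s and v_s determines the other. -/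
namespace GrassmannianResolution

/-- For an `m`-primary relation `F = F_{m,u}`, any two distinct pairs
`{u_s, v_s} ≠ {u_t, v_t}` of `Λ_F` are disjoint; in particular the pairs are two-element sets
and each element of `I_{d,n}` occurs in at most one pair.  (The pair of the leading term is
`{m, u}`, and the pair of the term indexed by `c ∈ m ∖ u` is
`{u^r ∪ {c}, {u₀} ∪ (m ∖ {c})}`.) -/
theorem primaryRel_pairs_disjoint
    (d n : ℕ) (hd : 1 ≤ d) (hdn : d < n) (K : Type*) [Field K]
    (m u : Idn d n) (hu : 2 ≤ (u.1 \ m.1).card) :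
    let u0 : Fin n := (u.1 \ m.1).min' (Finset.card_pos.mp (by omega))
    let pr : Fin n → Finset (Finset (Fin n)) :=
      fun c => {insert c (u.1.erase u0), insert u0 (m.1.erase c)}
    (∀ c ∈ m.1 \ u.1, Disjoint ({m.1, u.1} : Finset (Finset (Fin n))) (pr c)) ∧
    (∀ c ∈ m.1 \ u.1, ∀ c' ∈ m.1 \ u.1, c ≠ c' → Disjoint (pr c) (pr c')) ∧
    ({m.1, u.1} : Finset (Finset (Fin n))).card = 2 ∧
    (∀ c ∈ m.1 \ u.1, (pr c).card = 2) := by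
  intro u0 pr
  have hu0 : u0 ∈ u.1 \ m.1 := Finset.min'_mem _ _
  have hu0u : u0 ∈ u.1 := (Finset.mem_sdiff.mp hu0).1
  have hu0m : u0 ∉ m.1 := (Finset.mem_sdiff.mp hu0).2
  obtain ⟨w, hw⟩ : ((u.1 \ m.1).erase u0).Nonempty := by
    rw [← Finset.card_pos, Finset.card_erase_of_mem hu0]; omega
  have hwne : w ≠ u0 := (Finset.mem_erase.mp hw).1
  have hwu : w ∈ u.1 := (Finset.mem_sdiff.mp (Finset.mem_erase.mp hw).2).1
  have hwm : w ∉ m.1 := (Finset.mem_sdiff.mp (Finset.mem_erase.mp hw).2).2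
  have hcard : 2 ≤ (m.1 \ u.1).card := by
    rw [Finset.card_sdiff_comm (m.2.trans u.2.symm)]; exact hu
  -- basic facts for a fixed c ∈ m \ u
  have hAw : ∀ c, w ∈ insert c (u.1.erase u0) :=
    fun c => Finset.mem_insert_of_mem (Finset.mem_erase.mpr ⟨hwne, hwu⟩)
  have hBw : ∀ c, w ∉ insert u0 (m.1.erase c) := by
    intro c hmem
    rcases Finset.mem_insert.mp hmem with h | h
    · exact hwne h
    · exact hwm (Finset.mem_erase.mp h).2
  have hmA : ∀ c, m.1 ≠ insert c (u.1.erase u0) := by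
    intro c h; exact hwm (h ▸ hAw c)
  have hmB : ∀ c, c ∈ m.1 → m.1 ≠ insert u0 (m.1.erase c) := by
    intro c hc h
    have : c ∈ insert u0 (m.1.erase c) := h ▸ hc
    rcases Finset.mem_insert.mp this with h' | h'
    · exact hu0m (h' ▸ hc)
    · exact (Finset.mem_erase.mp h').1 rfl
  have huA : ∀ c, c ∉ u.1 → u.1 ≠ insert c (u.1.erase u0) := by
    intro c hc h
    exact hc (h ▸ Finset.mem_insert_self c _)
  have huB : ∀ c, c ∈ m.1 \ u.1 → u.1 ≠ insert u0 (m.1.erase c) := by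
    intro c hc h
    obtain ⟨c', hc'⟩ : ((m.1 \ u.1).erase c).Nonempty := by
      rw [← Finset.card_pos, Finset.card_erase_of_mem hc]; omega
    have hc'ne : c' ≠ c := (Finset.mem_erase.mp hc').1
    have hc'm : c' ∈ m.1 := (Finset.mem_sdiff.mp (Finset.mem_erase.mp hc').2).1
    have hc'u : c' ∉ u.1 := (Finset.mem_sdiff.mp (Finset.mem_erase.mp hc').2).2
    have : c' ∈ u.1 := by
      rw [h]
      exact Finset.mem_insert_of_mem (Finset.mem_erase.mpr ⟨hc'ne, hc'm⟩)
    exact hc'u this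
  have hAB : ∀ c, insert c (u.1.erase u0) ≠ insert u0 (m.1.erase c) := by
    intro c h; exact hBw c (h ▸ hAw c)
  refine ⟨?_, ?_, ?_, ?_⟩
  · intro c hc
    have hcm := (Finset.mem_sdiff.mp hc).1
    have hcu := (Finset.mem_sdiff.mp hc).2
    rw [Finset.disjoint_left]
    intro x hx hx'
    rcases Finset.mem_insert.mp hx with rfl | hx
    · rcases Finset.mem_insert.mp hx' with h | h
      · exact hmA c h
      · exact hmB c hcm (Finset.mem_singleton.mp h)
    · have hxu : x = u.1 := Finset.mem_singleton.mp hx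
      subst hxu
      rcases Finset.mem_insert.mp hx' with h | h
      · exact huA c hcu h
      · exact huB c hc (Finset.mem_singleton.mp h)
  · intro c hc c' hc' hne
    have hcm := (Finset.mem_sdiff.mp hc).1
    have hcu := (Finset.mem_sdiff.mp hc).2
    have hc'm := (Finset.mem_sdiff.mp hc').1
    have hc'u := (Finset.mem_sdiff.mp hc').2
    rw [Finset.disjoint_left]
    intro x hx hx'
    rcases Finset.mem_insert.mp hx with rfl | hx
    · rcases Finset.mem_insert.mp hx' with h | h
      · -- insert c (u.erase u0) = insert c' (u.erase u0)
        have : c ∈ insert c' (u.1.erase u0) := h ▸ Finset.mem_insert_self c _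
        rcases Finset.mem_insert.mp this with h' | h'
        · exact hne h'
        · exact hcu (Finset.mem_erase.mp h').2
      · exact hBw c' ((Finset.mem_singleton.mp h) ▸ hAw c)
    · have hxB : x = insert u0 (m.1.erase c) := Finset.mem_singleton.mp hx
      subst hxB
      rcases Finset.mem_insert.mp hx' with h | h
      · exact hBw c (h.symm ▸ hAw c')
      · -- insert u0 (m.erase c) = insert u0 (m.erase c')
        have h' := Finset.mem_singleton.mp h
        have : c' ∈ insert u0 (m.1.erase c') := by
          rw [← h']
          exact Finset.mem_insert_of_mem (Finset.mem_erase.mpr ⟨fun e => hne e.symm, hc'm⟩)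
        rcases Finset.mem_insert.mp this with h'' | h''
        · exact hu0m (h'' ▸ hc'm)
        · exact (Finset.mem_erase.mp h'').1 rfl
  · rw [Finset.card_insert_of_notMem (by
      simp only [Finset.mem_singleton]
      intro h; exact hwm (h ▸ hwu)), Finset.card_singleton]
  · intro c hc
    rw [Finset.card_insert_of_notMem (by
      simp only [Finset.mem_singleton]; exact hAB c), Finset.card_singleton]

end GrassmannianResolution
end

section
/- Fix integers 1 ≤ d < n, a field k, m ∈ I_{d,n}, and distinct m-primary relations F_1,…,F_k, with associated polynomial ring R_{[k]} and homomorphism φ_{[k]}. Let i ∈ {1,…,k} and let {u,v} ≠ {u',v'} be two distinct pairs in Λ_{F_i}, and let f, g ∈ k[p_w : w ∈ I_{d,n}] be polynomials such that f·x_{(u,v)} − g·x_{(u',v')} ∈ ker φ_{[k]}. Then there exists h ∈ k[p_w : w ∈ I_{d,n}] with f = h·p_{u'}·p_{v'} and g = h·p_u·p_v; in particular f·x_{(u,v)} − g·x_{(u',v')} = h·(p_{u'}p_{v'}·x_{(u,v)} − p_u p_v·x_{(u',v')}). -/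
namespace GrassmannianResolution

/-- The set of (unordered) pairs `Λ_F` of a primary relation `F = F_{m,u}`, encoded as
two-element sets of index sets: the leading pair `{m, u}` together with the pairs
`{u^r ∪ {c}, {u₀} ∪ (m ∖ {c})}` for `c ∈ m ∖ u`. -/
def lamF {d n : ℕ} (m u : Idn d n) : Finset (Finset (Finset (Fin n))) :=
  if h : (u.1 \ m.1).Nonempty then
    insert {m.1, u.1}
      ((m.1 \ u.1).image fun c =>
        {insert c (u.1.erase ((u.1 \ m.1).min' h)),
          insert ((u.1 \ m.1).min' h) (m.1.erase c)})
  else ∅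

/-- The union `Λ_{F_1} ∪ ⋯ ∪ Λ_{F_κ}` for a family of primary relations. -/
abbrev lamU {d n κ : ℕ} (m : Idn d n) (us : Fin κ → Idn d n) :
    Finset (Finset (Finset (Fin n))) :=
  Finset.univ.biUnion fun i => lamF m (us i)

/-- The index type of the ρ-variables: pairs in `Λ_{F_1} ∪ ⋯ ∪ Λ_{F_κ}`. -/
abbrev RhoIx {d n κ : ℕ} (m : Idn d n) (us : Fin κ → Idn d n) : Type :=
  {P : Finset (Finset (Fin n)) // P ∈ lamU m us}

/-- `p_u · p_v` for an unordered pair `P = {u, v}`. -/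
noncomputable def pprodP (d n : ℕ) (K : Type*) [CommRing K] (P : Finset (Finset (Fin n))) :
    MvPolynomial (Idn d n) K :=
  ∏ s ∈ P, pvar d n K s

/-- The homomorphism `φ_{[κ]} : R_{[κ]} → k[p_u]`, `p_u ↦ p_u`, `x_{(u,v)} ↦ p_u p_v`. -/
noncomputable def phiR {d n κ : ℕ} (K : Type*) [CommRing K] (m : Idn d n)
    (us : Fin κ → Idn d n) :
    MvPolynomial (Idn d n ⊕ RhoIx m us) K →ₐ[K] MvPolynomial (Idn d n) K :=
  MvPolynomial.aeval (Sum.elim MvPolynomial.X fun P => pprodP d n K P.1)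

/-- The inclusion `k[p_u] → R_{[κ]}`. -/
noncomputable def iotaR {d n κ : ℕ} (K : Type*) [CommRing K] (m : Idn d n)
    (us : Fin κ → Idn d n) :
    MvPolynomial (Idn d n) K →ₐ[K] MvPolynomial (Idn d n ⊕ RhoIx m us) K :=
  MvPolynomial.rename Sum.inl

/-- Total degree of an exponent in the block of ρ-variables `{x_P : P ∈ Λ_{F_i}}`. -/
def blockDeg {d n κ : ℕ} (m : Idn d n) (us : Fin κ → Idn d n) (i : Fin κ)
    (e : (Idn d n ⊕ RhoIx m us) →₀ ℕ) : ℕ :=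
  e.sum fun a c => Sum.elim (fun _ => 0) (fun P => if P.1 ∈ lamF m (us i) then c else 0) a

/-- Total degree of an exponent in the ϖ-variables `{p_u}`. -/
def pDegE {d n κ : ℕ} (m : Idn d n) (us : Fin κ → Idn d n)
    (e : (Idn d n ⊕ RhoIx m us) →₀ ℕ) : ℕ :=
  e.sum fun a c => Sum.elim (fun _ => c) (fun _ => 0) a

/-- Total degree of an exponent in all ρ-variables. -/
def rhoDegE {d n κ : ℕ} (m : Idn d n) (us : Fin κ → Idn d n)
    (e : (Idn d n ⊕ RhoIx m us) →₀ ℕ) : ℕ :=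
  e.sum fun a c => Sum.elim (fun _ => 0) (fun _ => c) a

/-- A polynomial of `R_{[κ]}` is multi-homogeneous if it is homogeneous in the ϖ-variables and,
for each `i`, homogeneous in the block of ρ-variables `{x_P : P ∈ Λ_{F_i}}`. -/
def MultiHom {d n κ : ℕ} (K : Type*) [CommRing K] (m : Idn d n) (us : Fin κ → Idn d n)
    (f : MvPolynomial (Idn d n ⊕ RhoIx m us) K) : Prop :=
  ∀ e ∈ f.support, ∀ e' ∈ f.support,
    pDegE m us e = pDegE m us e' ∧ ∀ i, blockDeg m us i e = blockDeg m us i e'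

/-- A polynomial of `R_{[κ]}` is ρ-linear if, for each `i`, its total degree in the block
`{x_P : P ∈ Λ_{F_i}}` is at most 1. -/
def RhoLinear {d n κ : ℕ} (K : Type*) [CommRing K] (m : Idn d n) (us : Fin κ → Idn d n)
    (f : MvPolynomial (Idn d n ⊕ RhoIx m us) K) : Prop :=
  ∀ e ∈ f.support, ∀ i, blockDeg m us i e ≤ 1

/-- `deg_ρ`: the total degree of a polynomial of `R_{[κ]}` in all the ρ-variables. -/
def rhoDegP {d n κ : ℕ} (K : Type*) [CommRing K] (m : Idn d n) (us : Fin κ → Idn d n)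
    (f : MvPolynomial (Idn d n ⊕ RhoIx m us) K) : ℕ :=
  f.support.sup (rhoDegE m us)

/-- The monic monomial of `R_{[κ]}` in the ρ-variables only with exponent `ε`. -/
noncomputable def rmon {d n κ : ℕ} (K : Type*) [CommRing K] (m : Idn d n)
    (us : Fin κ → Idn d n) (ε : RhoIx m us →₀ ℕ) :
    MvPolynomial (Idn d n ⊕ RhoIx m us) K :=
  MvPolynomial.monomial (ε.mapDomain Sum.inr) 1

/-!
Under `φ`, the relation becomes `f · p_u p_v = g · p_{u'} p_{v'}` in the polynomial ring
`k[p_w]`, which is a unique factorization domain in which distinct variables are coprime primes.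
Distinct pairs of `Λ_{F_i}` are disjoint, so `p_{u'} p_{v'}` is coprime to `p_u p_v` and must
divide `f`; cancelling it gives `h`.
-/

open MvPolynomial

theorem exists_eq_mul_of_mul_eq_mul_of_isRelPrime {α : Type*} [CommMonoidWithZero α]
    [IsCancelMulZero α] [DecompositionMonoid α] {a b f g : α} (hab : IsRelPrime b a)
    (hb : b ≠ 0) (h : f * a = g * b) : ∃ c, f = c * b ∧ g = c * a := by
  obtain ⟨c, rfl⟩ := hab.dvd_of_dvd_mul_right ⟨g, by rw [h, mul_comm]⟩
  refine ⟨c, mul_comm _ _, mul_right_cancel₀ hb ?_⟩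
  rw [← h]
  ac_rfl

theorem isRelPrime_prod_X_of_disjoint {σ R : Type*} [CommRing R] [IsDomain R]
    [UniqueFactorizationMonoid R] {s t : Finset σ} (h : Disjoint s t) :
    IsRelPrime (∏ i ∈ s, X i : MvPolynomial σ R) (∏ j ∈ t, X j) :=
  IsRelPrime.prod_left fun _ hi => IsRelPrime.prod_right fun _ hj =>
    X_prime.irreducible.isRelPrime_iff_not_dvd.mpr
      (X_dvd_X.not.mpr fun e => Finset.disjoint_left.mp h hi (e ▸ hj))

theorem disjoint_subtype {α : Type*} {p : α → Prop} [DecidablePred p] {s t : Finset α}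
    (h : Disjoint s t) : Disjoint (s.subtype p) (t.subtype p) :=
  Finset.disjoint_left.mpr fun _ hs ht =>
    Finset.disjoint_left.mp h (Finset.mem_subtype.mp hs) (Finset.mem_subtype.mp ht)

theorem pprodP_eq_prod_X {d n : ℕ} (K : Type*) [CommRing K] {P : Finset (Finset (Fin n))}
    (hP : ∀ s ∈ P, s.card = d) :
    pprodP d n K P = ∏ s ∈ P.subtype (·.card = d), X s := by
  have hX (s : Idn d n) : (X s : MvPolynomial (Idn d n) K) = pvar d n K s.1 := by
    simp [pvar, s.2]
  simp_rw [hX, Finset.prod_subtype_eq_prod_filter, Finset.filter_true_of_mem hP, pprodP]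

theorem phiR_iotaR {d n κ : ℕ} (K : Type*) [CommRing K] (m : Idn d n) (us : Fin κ → Idn d n)
    (f : MvPolynomial (Idn d n) K) : phiR K m us (iotaR K m us f) = f := by
  rw [phiR, iotaR, aeval_rename]
  exact aeval_X_left_apply f

theorem phiR_X_inr {d n κ : ℕ} (K : Type*) [CommRing K] (m : Idn d n) (us : Fin κ → Idn d n)
    (P : RhoIx m us) : phiR K m us (X (Sum.inr P)) = pprodP d n K P.1 := by
  simp [phiR]

section Lambda
variable {d n : ℕ} {m u : Idn d n}

theorem mem_lamF_iff {P : Finset (Finset (Fin n))} (hu : (u.1 \ m.1).Nonempty) :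
    P ∈ lamF m u ↔ P = {m.1, u.1} ∨ ∃ c ∈ m.1, c ∉ u.1 ∧
      P = {insert c (u.1.erase ((u.1 \ m.1).min' hu)),
        insert ((u.1 \ m.1).min' hu) (m.1.erase c)} := by
  simp [lamF, hu, eq_comm, and_assoc]

theorem card_eq_of_mem_lamF {P : Finset (Finset (Fin n))} (hP : P ∈ lamF m u)
    {s : Finset (Fin n)} (hs : s ∈ P) : s.card = d := by
  have hu : (u.1 \ m.1).Nonempty := by
    by_contra h
    simp [lamF, h] at hP
  obtain ⟨hu₀u, hu₀m⟩ := Finset.mem_sdiff.mp ((u.1 \ m.1).min'_mem hu)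
  rw [mem_lamF_iff hu] at hP
  rcases hP with rfl | ⟨c, hcm, hcu, rfl⟩ <;> simp only [Finset.mem_insert,
    Finset.mem_singleton] at hs <;> rcases hs with rfl | rfl
  · exact m.2
  · exact u.2
  · rw [Finset.card_insert_of_notMem (fun h => hcu (Finset.mem_of_mem_erase h)),
      Finset.card_erase_add_one hu₀u, u.2]
  · rw [Finset.card_insert_of_notMem (fun h => hu₀m (Finset.mem_of_mem_erase h)),
      Finset.card_erase_add_one hcm, m.2]

theorem disjoint_of_mem_lamF (hu : 2 ≤ (u.1 \ m.1).card) {P P' : Finset (Finset (Fin n))}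
    (hP : P ∈ lamF m u) (hP' : P' ∈ lamF m u) (hPP' : P ≠ P') : Disjoint P P' := by
  have hne : (u.1 \ m.1).Nonempty := Finset.card_pos.mp (by omega)
  rw [mem_lamF_iff hne] at hP hP'
  obtain ⟨hu₀u, hu₀m⟩ := Finset.mem_sdiff.mp ((u.1 \ m.1).min'_mem hne)
  obtain ⟨w, hw, hwu₀⟩ := Finset.exists_mem_ne (by omega : 1 < (u.1 \ m.1).card)
    ((u.1 \ m.1).min' hne)
  obtain ⟨hwu, hwm⟩ := Finset.mem_sdiff.mp hw
  generalize (u.1 \ m.1).min' hne = u₀ at *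
  -- With `A c = insert c (u ∖ u₀)` and `B c = insert u₀ (m ∖ c)`: `w` lies in `u` and every
  -- `A c` but not in `m` or any `B c`; `u₀` separates `m` from `B c`; and `c` separates `A c`
  -- from `u` and from `A c'`, and `B c'` from `B c`.
  have hcA {c c' : Fin n} (hc : c ∉ u.1) (h : c ≠ c') : c ∉ insert c' (u.1.erase u₀) := by
    grind
  have hcB {c : Fin n} (hc : c ∈ m.1) : c ∉ insert u₀ (m.1.erase c) := by grind
  rw [Finset.disjoint_left]
  rcases hP with rfl | ⟨c, hcm, hcu, rfl⟩ <;> rcases hP' with rfl | ⟨c', hc'm, hc'u, rfl⟩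
  · exact absurd rfl hPP'
  · grind
  · grind
  · have hcc' : c ≠ c' := by rintro rfl; exact hPP' rfl
    grind

end Lambda

theorem kernel_binomial_degRho_one_general
    (d n : ℕ) (K : Type*) [Field K]
    (m : Idn d n) (κ : ℕ) (us : Fin κ → Idn d n)
    (hprim : ∀ i, 2 ≤ ((us i).1 \ m.1).card)
    (i : Fin κ) (P P' : Finset (Finset (Fin n)))
    (hP : P ∈ lamF m (us i)) (hP' : P' ∈ lamF m (us i)) (hPP' : P ≠ P')
    (f g : MvPolynomial (Idn d n) K)
    (hker : phiR K m us
        (iotaR K m us f *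
            MvPolynomial.X (Sum.inr ⟨P, Finset.mem_biUnion.mpr ⟨i, Finset.mem_univ i, hP⟩⟩) -
          iotaR K m us g *
            MvPolynomial.X (Sum.inr ⟨P', Finset.mem_biUnion.mpr ⟨i, Finset.mem_univ i, hP'⟩⟩))
      = 0) :
    ∃ h : MvPolynomial (Idn d n) K, f = h * pprodP d n K P' ∧ g = h * pprodP d n K P := by
  have hrel : f * pprodP d n K P = g * pprodP d n K P' := by
    rwa [map_sub, map_mul, map_mul, phiR_iotaR, phiR_iotaR, phiR_X_inr, phiR_X_inr,
      sub_eq_zero] at hker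
  have hdisj : Disjoint (P'.subtype (·.card = d)) (P.subtype (·.card = d)) :=
    disjoint_subtype (disjoint_of_mem_lamF (hprim i) hP' hP hPP'.symm)
  rw [pprodP_eq_prod_X K fun s => card_eq_of_mem_lamF hP,
    pprodP_eq_prod_X K fun s => card_eq_of_mem_lamF hP'] at hrel ⊢
  exact exists_eq_mul_of_mul_eq_mul_of_isRelPrime (isRelPrime_prod_X_of_disjoint hdisj)
    (Finset.prod_ne_zero_iff.mpr fun s _ => X_ne_zero s) hrel

/-- If `{u,v} ≠ {u',v'}` are distinct pairs of `Λ_{F_i}` and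
`f·x_{(u,v)} − g·x_{(u',v')} ∈ ker φ_{[κ]}`, then `f = h·p_{u'}p_{v'}` and `g = h·p_u p_v`
for some polynomial `h` in the ϖ-variables. -/
theorem kernel_binomial_degRho_one
    (d n : ℕ) (hd : 1 ≤ d) (hdn : d < n) (K : Type*) [Field K]
    (m : Idn d n) (κ : ℕ) (us : Fin κ → Idn d n)
    (hprim : ∀ i, 2 ≤ ((us i).1 \ m.1).card) (hdist : Function.Injective us)
    (i : Fin κ) (P P' : Finset (Finset (Fin n)))
    (hP : P ∈ lamF m (us i)) (hP' : P' ∈ lamF m (us i)) (hPP' : P ≠ P')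
    (f g : MvPolynomial (Idn d n) K)
    (hker : phiR K m us
        (iotaR K m us f *
            MvPolynomial.X (Sum.inr ⟨P, Finset.mem_biUnion.mpr ⟨i, Finset.mem_univ i, hP⟩⟩) -
          iotaR K m us g *
            MvPolynomial.X (Sum.inr ⟨P', Finset.mem_biUnion.mpr ⟨i, Finset.mem_univ i, hP'⟩⟩))
      = 0) :
    ∃ h : MvPolynomial (Idn d n) K, f = h * pprodP d n K P' ∧ g = h * pprodP d n K P :=
  kernel_binomial_degRho_one_general d n K m κ us hprim i P P' hP hP' hPP' f g hker

end GrassmannianResolution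
end

section
/- Let K be a field, let ℓ ≥ 1 be an integer, let b, c_1,…,c_ℓ ∈ K and ε_1,…,ε_ℓ ∈ {1,−1}, and assume b ≠ 0 and Σ_{i=1}^ℓ ε_i·c_i ≠ 0. Let M be the (ℓ+1)×(ℓ+1) matrix over K with entries: M_{i,1} = c_i and M_{i,i+1} = b for 1 ≤ i ≤ ℓ; M_{ℓ+1,1} = 0 and M_{ℓ+1,j+1} = ε_j for 1 ≤ j ≤ ℓ; all remaining entries 0. Then M is invertible. -/
private lemma case_beta_aux {K : Type*} [Field K] {ℓ : ℕ}
    (b : K) (c ε : Fin ℓ → K)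
    (hb : b ≠ 0) (hsum : (∑ i, ε i * c i) ≠ 0)
    (M : Matrix (Fin (ℓ + 1)) (Fin (ℓ + 1)) K)
    (h1 : ∀ i : Fin ℓ, M i.castSucc 0 = c i)
    (h2 : ∀ i j : Fin ℓ, M i.castSucc j.succ = if j = i then b else 0)
    (h3 : M (Fin.last ℓ) 0 = 0)
    (h4 : ∀ j : Fin ℓ, M (Fin.last ℓ) j.succ = ε j) :
    IsUnit M := by
  rw [← Matrix.mulVec_injective_iff_isUnit]
  intro x y hxy
  rw [← sub_eq_zero]
  set v := x - y with hv
  have hz : M.mulVec v = 0 := by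
    rw [hv, Matrix.mulVec_sub, hxy, sub_self]
  have row : ∀ i : Fin ℓ, c i * v 0 + b * v i.succ = 0 := by
    intro i
    have h := congrFun hz i.castSucc
    simpa [Matrix.mulVec, dotProduct, Fin.sum_univ_succ, h1, h2,
      ite_mul, Finset.sum_ite_eq'] using h
  have lastEq : (∑ j, ε j * v j.succ) = 0 := by
    have h := congrFun hz (Fin.last ℓ)
    simpa [Matrix.mulVec, dotProduct, Fin.sum_univ_succ, h3, h4] using h
  have h5 : ∀ i : Fin ℓ, v i.succ = -(c i * v 0) / b := by
    intro i
    rw [eq_div_iff hb]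
    linear_combination row i
  have hv0 : v 0 = 0 := by
    have h6 : (∑ j, ε j * v j.succ) = (-(v 0) / b) * ∑ j, ε j * c j := by
      rw [Finset.mul_sum]
      refine Finset.sum_congr rfl fun j _ => ?_
      rw [h5 j]
      ring
    rw [h6] at lastEq
    rcases mul_eq_zero.mp lastEq with h | h
    · have := (div_eq_zero_iff.mp h).resolve_right hb
      exact neg_eq_zero.mp this
    · exact absurd h hsum
  funext i
  refine Fin.cases ?_ ?_ i
  · exact hv0
  · intro j
    rw [h5 j, hv0]
    simp

/-- The full-rank assertion for the partial Jacobian matrix arising in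
Case β of the Jacobian computation: the `(ℓ+1)×(ℓ+1)` matrix with `M_{i,1} = c_i`,
`M_{i,i+1} = b` for `1 ≤ i ≤ ℓ`, last row `(0, ε_1, …, ε_ℓ)` and all other entries `0`
is invertible provided `b ≠ 0` and `Σ ε_i c_i ≠ 0` (with `ε_i = ±1`). -/
theorem case_beta_jacobian_invertible
    (K : Type*) [Field K] (ℓ : ℕ) (hℓ : 1 ≤ ℓ)
    (b : K) (c : Fin ℓ → K) (ε : Fin ℓ → K)
    (hε : ∀ i, ε i = 1 ∨ ε i = -1)
    (hb : b ≠ 0) (hsum : (∑ i, ε i * c i) ≠ 0) :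
    IsUnit (Matrix.of fun i j : Fin (ℓ + 1) =>
      if h : (i : ℕ) < ℓ then
        (if (j : ℕ) = 0 then c ⟨i, h⟩
          else if (j : ℕ) = (i : ℕ) + 1 then b else 0)
      else
        (if hj : (j : ℕ) = 0 then 0
          else ε ⟨(j : ℕ) - 1, by have := j.isLt; omega⟩)) := by
  refine case_beta_aux b c ε hb hsum _ ?_ ?_ ?_ ?_
  · intro i
    simp [i.isLt]
  · intro i j
    simp only [Matrix.of_apply, Fin.coe_castSucc, Fin.val_succ, dif_pos i.isLt]
    rw [if_neg (by omega)]
    by_cases h : j = i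
    · subst h; simp
    · rw [if_neg (fun hc => h (Fin.ext (by omega))), if_neg h]
  · simp
  · intro j
    simp
end

section
/- Let K be a field, let ℓ ≥ 1 be an integer, and let b, d, d_0, d_1,…,d_ℓ, a_1,…,a_ℓ ∈ K and ε_F, ε_1,…,ε_ℓ ∈ {1,−1}. Assume b ≠ 0, d ≠ 0, b = d·d_0, and a_i·b = d·d_i for all 1 ≤ i ≤ ℓ. Let M be the (ℓ+2)×(ℓ+2) matrix over K with rows and columns indexed by 0,1,…,ℓ+1, defined by: row 0 equals (1, −d_0, 0, …, 0); for 1 ≤ i ≤ ℓ, row i has entries M_{i,0} = a_i, M_{i,1} = −d_i, M_{i,i+1} = b, and 0 elsewhere; row ℓ+1 equals (0, ε_F, ε_1, …, ε_ℓ). Then M is invertible. -/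
/-- The full-rank assertion for the partial Jacobian matrix arising in
Case γ of the Jacobian computation: the `(ℓ+2)×(ℓ+2)` matrix with rows/columns indexed by
`0,…,ℓ+1`, with row `0` equal to `(1, −d₀, 0, …, 0)`, rows `1 ≤ i ≤ ℓ` having entries
`a_i` (column 0), `−d_i` (column 1), `b` (column `i+1`) and `0` elsewhere, and last row
`(0, ε_F, ε_1, …, ε_ℓ)`, is invertible provided `b ≠ 0`, `d ≠ 0`, `b = d·d₀` and
`a_i·b = d·d_i` (with `ε_F, ε_i = ±1`). -/
theorem case_gamma_jacobian_invertible
    (K : Type*) [Field K] (ℓ : ℕ) (hℓ : 1 ≤ ℓ)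
    (b d d0 : K) (dd : Fin ℓ → K) (a : Fin ℓ → K) (εF : K) (ε : Fin ℓ → K)
    (hεF : εF = 1 ∨ εF = -1) (hε : ∀ i, ε i = 1 ∨ ε i = -1)
    (hb : b ≠ 0) (hd : d ≠ 0) (hbd : b = d * d0) (hab : ∀ i, a i * b = d * dd i) :
    IsUnit (Matrix.of fun i j : Fin (ℓ + 2) =>
      if hi0 : (i : ℕ) = 0 then
        (if (j : ℕ) = 0 then (1 : K) else if (j : ℕ) = 1 then -d0 else 0)
      else if h : (i : ℕ) ≤ ℓ then
        (if (j : ℕ) = 0 then a ⟨(i : ℕ) - 1, by omega⟩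
          else if (j : ℕ) = 1 then -(dd ⟨(i : ℕ) - 1, by omega⟩)
          else if (j : ℕ) = (i : ℕ) + 1 then b else 0)
      else
        (if hj0 : (j : ℕ) = 0 then 0
          else if hj1 : (j : ℕ) = 1 then εF
          else ε ⟨(j : ℕ) - 2, by have := j.isLt; omega⟩)) := by
  rw [Matrix.isUnit_iff_isUnit_det, isUnit_iff_ne_zero, Ne,
    ← Matrix.exists_mulVec_eq_zero_iff]
  rintro ⟨v, hv, hMv⟩
  apply hv
  have hεF0 : εF ≠ 0 := by rcases hεF with h | h <;> simp [h]
  have h0 := congrFun hMv 0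
  simp [Matrix.mulVec, dotProduct, Fin.sum_univ_succ] at h0
  have hmid : ∀ i : Fin ℓ, v ⟨(i : ℕ) + 2, by omega⟩ = 0 := by
    intro i
    have hi := congrFun hMv ⟨(i : ℕ) + 1, by omega⟩
    simp [Matrix.mulVec, dotProduct, Fin.sum_univ_succ, i.isLt.le,
      Nat.lt_iff_add_one_le.mp i.isLt, Fin.val_eq_val, Finset.sum_ite_eq'] at hi
    have hw : d * (b * v (i.succ.succ)) = 0 := by
      linear_combination d * hi - d * a i * h0 - v 1 * hab i + a i * v 1 * hbd
    have : v i.succ.succ = 0 := by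
      rw [mul_eq_zero, mul_eq_zero] at hw
      tauto
    convert this using 2
    exact Fin.ext (by simp)
  have hlast := congrFun hMv (Fin.last (ℓ + 1))
  have hls : ∀ x : Fin ℓ, v x.succ.succ = 0 := by
    intro x
    have := hmid x
    convert this using 2
    exact Fin.ext (by simp)
  simp [Matrix.mulVec, dotProduct, Fin.sum_univ_succ, Fin.last, hls] at hlast
  have hv1 : v 1 = 0 := by tauto
  have hv0 : v 0 = 0 := by rw [hv1] at h0; simpa using h0
  funext j
  show v j = 0
  rcases Nat.lt_or_ge (j : ℕ) 2 with hj | hj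
  · interval_cases h : (j : ℕ)
    · rwa [show j = 0 from Fin.ext h]
    · rwa [show j = 1 from Fin.ext h]
  · have hje : j = (⟨(j : ℕ) - 2 + 2, by omega⟩ : Fin (ℓ + 2)) := by simp [Fin.ext_iff]; omega
    rw [hje]
    exact hmid ⟨(j : ℕ) - 2, by omega⟩
end
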